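/- arXiv:nlin/0503001 — 6 statements merged into one kernel-verified Lean document; each statement's English description precedes it below -/
import Mathlib

section
/- Let f : ℝ×ℝ → ℝ (variables (x,t)) be smooth and let (x₀,t₀) be a point with f(x₀,t₀) ≠ 0. Define u = −2(f f_{xx} − f_x²)/f² (i.e. u = −2 ∂_x² ln f) on a neighborhood of (x₀,t₀) where f ≠ 0. Then at (x₀,t₀): u_t − 6 u u_x + u_{xxx} = −∂_x [ 2(f_{xt} f − f_t f_x + f_{xxxx} f − 4 f_{xxx} f_x + 3 f_{xx}²)/f² ]. In particular, if f satisfies the bilinear KdV equation f_{xt} f − f_t f_x + f_{xxxx} f − 4 f_{xxx} f_x + 3 f_{xx}² = 0 everywhere and f is nowhere zero, then u = −2 ∂_x² ln f satisfies the KdV equation u_t − 6 u u_x + u_{xxx} = 0 everywhere. -/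
/-- Partial derivative with respect to the first variable `x`. -/
noncomputable def px (f : ℝ × ℝ → ℝ) : ℝ × ℝ → ℝ :=
  fun p => deriv (fun x => f (x, p.2)) p.1

/-- Partial derivative with respect to the second variable `t`. -/
noncomputable def pt (f : ℝ × ℝ → ℝ) : ℝ × ℝ → ℝ :=
  fun p => deriv (fun t => f (p.1, t)) p.2

open Filter Topology

private lemma hasDerivAt_congr' {F G : ℝ → ℝ} {d e x : ℝ}
    (h : HasDerivAt F d x) (h1 : ∀ y, G y = F y) (h2 : e = d) : HasDerivAt G e x := by
  subst h2
  exact (funext h1 : G = F) ▸ h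

private lemma sliceX {F : ℝ × ℝ → ℝ} (hF : ContDiff ℝ (⊤ : ℕ∞) F) (p : ℝ × ℝ) :
    HasDerivAt (fun x => F (x, p.2)) (px F p) p.1 := by
  have : DifferentiableAt ℝ (fun x : ℝ => F (x, p.2)) p.1 :=
    ((hF.differentiable (by simp)).comp
      (differentiable_id.prodMk (differentiable_const p.2))).differentiableAt
  exact this.hasDerivAt

private lemma sliceT {F : ℝ × ℝ → ℝ} (hF : ContDiff ℝ (⊤ : ℕ∞) F) (p : ℝ × ℝ) :
    HasDerivAt (fun t => F (p.1, t)) (pt F p) p.2 := by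
  have : DifferentiableAt ℝ (fun t : ℝ => F (p.1, t)) p.2 :=
    ((hF.differentiable (by simp)).comp
      ((differentiable_const p.1).prodMk differentiable_id)).differentiableAt
  exact this.hasDerivAt

private lemma px_eq_fderiv {F : ℝ × ℝ → ℝ} (hF : ContDiff ℝ (⊤ : ℕ∞) F) :
    px F = fun p => fderiv ℝ F p (1, 0) := by
  funext p
  exact (((hF.differentiable (by simp)) p).hasFDerivAt.comp_hasDerivAt p.1
    ((hasDerivAt_id p.1).prodMk (hasDerivAt_const p.1 p.2))).deriv

private lemma pt_eq_fderiv {F : ℝ × ℝ → ℝ} (hF : ContDiff ℝ (⊤ : ℕ∞) F) :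
    pt F = fun p => fderiv ℝ F p (0, 1) := by
  funext p
  exact (((hF.differentiable (by simp)) p).hasFDerivAt.comp_hasDerivAt p.2
    ((hasDerivAt_const p.2 p.1).prodMk (hasDerivAt_id p.2))).deriv

private lemma contDiff_px {F : ℝ × ℝ → ℝ} (hF : ContDiff ℝ (⊤ : ℕ∞) F) : ContDiff ℝ (⊤ : ℕ∞) (px F) := by
  rw [px_eq_fderiv hF]
  exact (hF.fderiv_right (by simp)).clm_apply contDiff_const

private lemma contDiff_pt {F : ℝ × ℝ → ℝ} (hF : ContDiff ℝ (⊤ : ℕ∞) F) : ContDiff ℝ (⊤ : ℕ∞) (pt F) := by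
  rw [pt_eq_fderiv hF]
  exact (hF.fderiv_right (by simp)).clm_apply contDiff_const

private lemma pt_px_comm {F : ℝ × ℝ → ℝ} (hF : ContDiff ℝ (⊤ : ℕ∞) F) :
    pt (px F) = px (pt F) := by
  have hd : Differentiable ℝ F := hF.differentiable (by simp)
  have hd' : Differentiable ℝ (fderiv ℝ F) := (hF.fderiv_right (m := (⊤ : ℕ∞)) (by simp)).differentiable (by simp)
  funext p
  rw [px_eq_fderiv hF, pt_eq_fderiv hF]
  have key : ∀ v w : ℝ × ℝ, (fderiv ℝ (fderiv ℝ F) p v) w = (fderiv ℝ (fderiv ℝ F) p w) v :=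
    fun v w => second_derivative_symmetric (fun y => (hd y).hasFDerivAt) (hd' p).hasFDerivAt v w
  have c1 : HasDerivAt (fun t => fderiv ℝ F (p.1, t) (1, 0))
      ((fderiv ℝ (fderiv ℝ F) p (0, 1)) (1, 0)) p.2 := by
    have h0 : HasDerivAt (fun t => fderiv ℝ F (p.1, t)) (fderiv ℝ (fderiv ℝ F) p (0, 1)) p.2 :=
      (hd' p).hasFDerivAt.comp_hasDerivAt p.2
        ((hasDerivAt_const p.2 p.1).prodMk (hasDerivAt_id p.2))
    simpa using h0.clm_apply (hasDerivAt_const p.2 ((1 : ℝ), (0 : ℝ)))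
  have c2 : HasDerivAt (fun x => fderiv ℝ F (x, p.2) (0, 1))
      ((fderiv ℝ (fderiv ℝ F) p (1, 0)) (0, 1)) p.1 := by
    have h0 : HasDerivAt (fun x => fderiv ℝ F (x, p.2)) (fderiv ℝ (fderiv ℝ F) p (1, 0)) p.1 :=
      (hd' p).hasFDerivAt.comp_hasDerivAt p.1
        ((hasDerivAt_id p.1).prodMk (hasDerivAt_const p.1 p.2))
    simpa using h0.clm_apply (hasDerivAt_const p.1 ((0 : ℝ), (1 : ℝ)))
  show pt (fun q => fderiv ℝ F q (1, 0)) p = px (fun q => fderiv ℝ F q (0, 1)) p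
  rw [show pt (fun q => fderiv ℝ F q (1, 0)) p = (fderiv ℝ (fderiv ℝ F) p (0, 1)) (1, 0) from
    c1.deriv, show px (fun q => fderiv ℝ F q (0, 1)) p = (fderiv ℝ (fderiv ℝ F) p (1, 0)) (0, 1)
    from c2.deriv]
  exact (key (0, 1) (1, 0)).symm ▸ rfl

private lemma px_congr {F G : ℝ × ℝ → ℝ} {p : ℝ × ℝ} (h : F =ᶠ[𝓝 p] G) :
    px F p = px G p := by
  have hc : Filter.Tendsto (fun x : ℝ => (x, p.2)) (𝓝 p.1) (𝓝 p) :=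
    (continuous_id.prodMk continuous_const).continuousAt
  exact Filter.EventuallyEq.deriv_eq (h.comp_tendsto hc)

/-- The key computation, with all slice derivatives given abstractly
(commutativity of mixed partials is baked into the hypotheses `T1`, `T2`). -/
private lemma kdv_key (f g1 g2 g3 g4 g5 h0 h1 h2 u Δ : ℝ × ℝ → ℝ)
    (hfc : Continuous f)
    (Sg0 : ∀ p : ℝ × ℝ, HasDerivAt (fun x => f (x, p.2)) (g1 p) p.1)
    (Sg1 : ∀ p : ℝ × ℝ, HasDerivAt (fun x => g1 (x, p.2)) (g2 p) p.1)
    (Sg2 : ∀ p : ℝ × ℝ, HasDerivAt (fun x => g2 (x, p.2)) (g3 p) p.1)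
    (Sg3 : ∀ p : ℝ × ℝ, HasDerivAt (fun x => g3 (x, p.2)) (g4 p) p.1)
    (Sg4 : ∀ p : ℝ × ℝ, HasDerivAt (fun x => g4 (x, p.2)) (g5 p) p.1)
    (Sh0 : ∀ p : ℝ × ℝ, HasDerivAt (fun x => h0 (x, p.2)) (h1 p) p.1)
    (Sh1 : ∀ p : ℝ × ℝ, HasDerivAt (fun x => h1 (x, p.2)) (h2 p) p.1)
    (T0 : ∀ p : ℝ × ℝ, HasDerivAt (fun t => f (p.1, t)) (h0 p) p.2)
    (T1 : ∀ p : ℝ × ℝ, HasDerivAt (fun t => g1 (p.1, t)) (h1 p) p.2)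
    (T2 : ∀ p : ℝ × ℝ, HasDerivAt (fun t => g2 (p.1, t)) (h2 p) p.2)
    (hu : ∀ p : ℝ × ℝ, u p = -2 * (f p * g2 p - g1 p ^ 2) / f p ^ 2)
    (hΔ : ∀ p : ℝ × ℝ,
      Δ p = h1 p * f p - h0 p * g1 p + g4 p * f p - 4 * g3 p * g1 p + 3 * g2 p ^ 2)
    (p₀ : ℝ × ℝ) (hf0 : f p₀ ≠ 0) :
    pt u p₀ - 6 * u p₀ * px u p₀ + px (px (px u)) p₀
      = -(px (fun p => 2 * Δ p / f p ^ 2) p₀) := by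
  have hUo : IsOpen {q : ℝ × ℝ | f q ≠ 0} := isOpen_ne.preimage hfc
  -- first x-derivative of u
  have hx1 : ∀ p : ℝ × ℝ, f p ≠ 0 → HasDerivAt (fun x => u (x, p.2))
      ((-4 * g1 p ^ 3 + 6 * f p * g1 p * g2 p - 2 * f p ^ 2 * g3 p) / f p ^ 3) p.1 := by
    intro p hp
    have hnum : HasDerivAt (fun x => -2 * (f (x, p.2) * g2 (x, p.2) - g1 (x, p.2) ^ 2))
        (-2 * (g1 p * g2 p + f p * g3 p - 2 * g1 p * g2 p)) p.1 :=
      hasDerivAt_congr' ((((Sg0 p).mul (Sg2 p)).sub ((Sg1 p).pow 2)).const_mul (-2 : ℝ))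
        (fun y => by simp only [Pi.mul_apply, Pi.sub_apply, Pi.add_apply, Pi.pow_apply, Pi.neg_apply] <;> ring) (by simp only [Prod.mk.eta]; push_cast; ring)
    have hden : HasDerivAt (fun x => f (x, p.2) ^ 2) (2 * f p * g1 p) p.1 :=
      hasDerivAt_congr' ((Sg0 p).pow 2) (fun y => rfl)
        (by simp only [Prod.mk.eta]; push_cast; ring)
    exact hasDerivAt_congr' (hnum.div hden (pow_ne_zero 2 hp))
      (fun y => hu (y, p.2)) (by simp only [Prod.mk.eta]; field_simp; ring)
  have hpxu : ∀ p : ℝ × ℝ, f p ≠ 0 →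
      px u p = (-4 * g1 p ^ 3 + 6 * f p * g1 p * g2 p - 2 * f p ^ 2 * g3 p) / f p ^ 3 :=
    fun p hp => (hx1 p hp).deriv
  -- second x-derivative
  have hx2 : ∀ p : ℝ × ℝ, f p ≠ 0 → HasDerivAt
      (fun x => (-4 * g1 (x, p.2) ^ 3 + 6 * f (x, p.2) * g1 (x, p.2) * g2 (x, p.2)
          - 2 * f (x, p.2) ^ 2 * g3 (x, p.2)) / f (x, p.2) ^ 3)
      ((12 * g1 p ^ 4 - 24 * f p * g1 p ^ 2 * g2 p + 6 * f p ^ 2 * g2 p ^ 2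
          + 8 * f p ^ 2 * g1 p * g3 p - 2 * f p ^ 3 * g4 p) / f p ^ 4) p.1 := by
    intro p hp
    have hnum : HasDerivAt (fun x => -4 * g1 (x, p.2) ^ 3
          + 6 * f (x, p.2) * g1 (x, p.2) * g2 (x, p.2) - 2 * f (x, p.2) ^ 2 * g3 (x, p.2))
        (-6 * g1 p ^ 2 * g2 p + 6 * f p * g2 p ^ 2 + 2 * f p * g1 p * g3 p
          - 2 * f p ^ 2 * g4 p) p.1 :=
      hasDerivAt_congr'
        (((((Sg1 p).pow 3).const_mul (-4 : ℝ)).add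
            ((((Sg0 p).mul (Sg1 p)).mul (Sg2 p)).const_mul (6 : ℝ))).sub
          ((((Sg0 p).pow 2).mul (Sg3 p)).const_mul (2 : ℝ)))
        (fun y => by simp only [Pi.mul_apply, Pi.sub_apply, Pi.add_apply, Pi.pow_apply, Pi.neg_apply]; ring) (by simp only [Prod.mk.eta, Pi.mul_apply, Pi.sub_apply, Pi.add_apply, Pi.pow_apply, Pi.neg_apply]; push_cast; ring)
    have hden : HasDerivAt (fun x => f (x, p.2) ^ 3) (3 * f p ^ 2 * g1 p) p.1 :=
      hasDerivAt_congr' ((Sg0 p).pow 3) (fun y => rfl)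
        (by simp only [Prod.mk.eta]; push_cast; ring)
    exact hasDerivAt_congr' (hnum.div hden (pow_ne_zero 3 hp)) (fun y => rfl)
      (by simp only [Prod.mk.eta]; field_simp; ring)
  have hpx2 : ∀ p : ℝ × ℝ, f p ≠ 0 →
      px (px u) p = (12 * g1 p ^ 4 - 24 * f p * g1 p ^ 2 * g2 p + 6 * f p ^ 2 * g2 p ^ 2
        + 8 * f p ^ 2 * g1 p * g3 p - 2 * f p ^ 3 * g4 p) / f p ^ 4 := by
    intro p hp
    have hev : px u =ᶠ[𝓝 p] (fun q =>
        (-4 * g1 q ^ 3 + 6 * f q * g1 q * g2 q - 2 * f q ^ 2 * g3 q) / f q ^ 3) :=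
      Filter.eventually_of_mem (hUo.mem_nhds hp) (fun q hq => hpxu q hq)
    rw [px_congr hev]
    exact (hx2 p hp).deriv
  -- third x-derivative at p₀
  have hx3 : HasDerivAt
      (fun x => (12 * g1 (x, p₀.2) ^ 4 - 24 * f (x, p₀.2) * g1 (x, p₀.2) ^ 2 * g2 (x, p₀.2)
          + 6 * f (x, p₀.2) ^ 2 * g2 (x, p₀.2) ^ 2 + 8 * f (x, p₀.2) ^ 2 * g1 (x, p₀.2) * g3 (x, p₀.2)
          - 2 * f (x, p₀.2) ^ 3 * g4 (x, p₀.2)) / f (x, p₀.2) ^ 4)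
      ((-48 * g1 p₀ ^ 5 + 120 * f p₀ * g1 p₀ ^ 3 * g2 p₀ - 60 * f p₀ ^ 2 * g1 p₀ * g2 p₀ ^ 2
          - 40 * f p₀ ^ 2 * g1 p₀ ^ 2 * g3 p₀ + 20 * f p₀ ^ 3 * g2 p₀ * g3 p₀
          + 10 * f p₀ ^ 3 * g1 p₀ * g4 p₀ - 2 * f p₀ ^ 4 * g5 p₀) / f p₀ ^ 5) p₀.1 := by
    have hnum : HasDerivAt (fun x => 12 * g1 (x, p₀.2) ^ 4
          - 24 * f (x, p₀.2) * g1 (x, p₀.2) ^ 2 * g2 (x, p₀.2)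
          + 6 * f (x, p₀.2) ^ 2 * g2 (x, p₀.2) ^ 2
          + 8 * f (x, p₀.2) ^ 2 * g1 (x, p₀.2) * g3 (x, p₀.2)
          - 2 * f (x, p₀.2) ^ 3 * g4 (x, p₀.2))
        (24 * g1 p₀ ^ 3 * g2 p₀ - 36 * f p₀ * g1 p₀ * g2 p₀ ^ 2 - 8 * f p₀ * g1 p₀ ^ 2 * g3 p₀
          + 20 * f p₀ ^ 2 * g2 p₀ * g3 p₀ + 2 * f p₀ ^ 2 * g1 p₀ * g4 p₀
          - 2 * f p₀ ^ 3 * g5 p₀) p₀.1 := by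
      have t1 := ((Sg1 p₀).pow 4).const_mul (12 : ℝ)
      have t2 := (((Sg0 p₀).mul ((Sg1 p₀).pow 2)).mul (Sg2 p₀)).const_mul (24 : ℝ)
      have t3 := (((Sg0 p₀).pow 2).mul ((Sg2 p₀).pow 2)).const_mul (6 : ℝ)
      have t4 := ((((Sg0 p₀).pow 2).mul (Sg1 p₀)).mul (Sg3 p₀)).const_mul (8 : ℝ)
      have t5 := (((Sg0 p₀).pow 3).mul (Sg4 p₀)).const_mul (2 : ℝ)
      exact hasDerivAt_congr' ((((t1.sub t2).add t3).add t4).sub t5)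
        (fun y => by simp only [Pi.mul_apply, Pi.sub_apply, Pi.add_apply, Pi.pow_apply, Pi.neg_apply]; ring) (by simp only [Prod.mk.eta, Pi.mul_apply, Pi.sub_apply, Pi.add_apply, Pi.pow_apply, Pi.neg_apply]; push_cast; ring)
    have hden : HasDerivAt (fun x => f (x, p₀.2) ^ 4) (4 * f p₀ ^ 3 * g1 p₀) p₀.1 :=
      hasDerivAt_congr' ((Sg0 p₀).pow 4) (fun y => rfl)
        (by simp only [Prod.mk.eta]; push_cast; ring)
    exact hasDerivAt_congr' (hnum.div hden (pow_ne_zero 4 hf0)) (fun y => rfl)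
      (by simp only [Prod.mk.eta]; field_simp; ring)
  have hpx3 : px (px (px u)) p₀ =
      (-48 * g1 p₀ ^ 5 + 120 * f p₀ * g1 p₀ ^ 3 * g2 p₀ - 60 * f p₀ ^ 2 * g1 p₀ * g2 p₀ ^ 2
        - 40 * f p₀ ^ 2 * g1 p₀ ^ 2 * g3 p₀ + 20 * f p₀ ^ 3 * g2 p₀ * g3 p₀
        + 10 * f p₀ ^ 3 * g1 p₀ * g4 p₀ - 2 * f p₀ ^ 4 * g5 p₀) / f p₀ ^ 5 := by
    have hev : px (px u) =ᶠ[𝓝 p₀] (fun q =>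
        (12 * g1 q ^ 4 - 24 * f q * g1 q ^ 2 * g2 q + 6 * f q ^ 2 * g2 q ^ 2
          + 8 * f q ^ 2 * g1 q * g3 q - 2 * f q ^ 3 * g4 q) / f q ^ 4) :=
      Filter.eventually_of_mem (hUo.mem_nhds hf0) (fun q hq => hpx2 q hq)
    rw [px_congr hev]
    exact hx3.deriv
  -- t-derivative of u at p₀
  have hptu : pt u p₀ = (-4 * g1 p₀ ^ 2 * h0 p₀ + 2 * f p₀ * g2 p₀ * h0 p₀
      + 4 * f p₀ * g1 p₀ * h1 p₀ - 2 * f p₀ ^ 2 * h2 p₀) / f p₀ ^ 3 := by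
    have hnum : HasDerivAt (fun t => -2 * (f (p₀.1, t) * g2 (p₀.1, t) - g1 (p₀.1, t) ^ 2))
        (-2 * (h0 p₀ * g2 p₀ + f p₀ * h2 p₀ - 2 * g1 p₀ * h1 p₀)) p₀.2 :=
      hasDerivAt_congr' ((((T0 p₀).mul (T2 p₀)).sub ((T1 p₀).pow 2)).const_mul (-2 : ℝ))
        (fun y => by simp only [Pi.mul_apply, Pi.sub_apply, Pi.add_apply, Pi.pow_apply, Pi.neg_apply] <;> ring) (by simp only [Prod.mk.eta]; push_cast; ring)
    have hden : HasDerivAt (fun t => f (p₀.1, t) ^ 2) (2 * f p₀ * h0 p₀) p₀.2 :=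
      hasDerivAt_congr' ((T0 p₀).pow 2) (fun y => rfl)
        (by simp only [Prod.mk.eta]; push_cast; ring)
    have h := hasDerivAt_congr' (hnum.div hden (pow_ne_zero 2 hf0))
      (fun y => hu (p₀.1, y))
      (e := (-4 * g1 p₀ ^ 2 * h0 p₀ + 2 * f p₀ * g2 p₀ * h0 p₀
        + 4 * f p₀ * g1 p₀ * h1 p₀ - 2 * f p₀ ^ 2 * h2 p₀) / f p₀ ^ 3)
      (by simp only [Prod.mk.eta]; field_simp; ring)
    exact h.deriv
  -- x-derivative of 2Δ/f² at p₀
  have hnumΔ : HasDerivAt (fun x => 2 * Δ (x, p₀.2))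
      (2 * (f p₀ * h2 p₀ - g2 p₀ * h0 p₀ + f p₀ * g5 p₀ - 3 * g1 p₀ * g4 p₀
        + 2 * g2 p₀ * g3 p₀)) p₀.1 :=
    hasDerivAt_congr'
      ((((((Sh1 p₀).mul (Sg0 p₀)).sub ((Sh0 p₀).mul (Sg1 p₀))).add
          ((Sg4 p₀).mul (Sg0 p₀))).sub
        (((Sg3 p₀).mul (Sg1 p₀)).const_mul (4 : ℝ))).add
        (((Sg2 p₀).pow 2).const_mul (3 : ℝ)) |>.const_mul (2 : ℝ))
      (fun y => by rw [hΔ (y, p₀.2)]; simp only [Pi.mul_apply, Pi.sub_apply, Pi.add_apply, Pi.pow_apply, Pi.neg_apply]; ring)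
      (by simp only [Prod.mk.eta]; push_cast; ring)
  have hdenΔ : HasDerivAt (fun x => f (x, p₀.2) ^ 2) (2 * f p₀ * g1 p₀) p₀.1 :=
    hasDerivAt_congr' ((Sg0 p₀).pow 2) (fun y => rfl)
      (by simp only [Prod.mk.eta]; push_cast; ring)
  have hR := (hnumΔ.div hdenΔ (pow_ne_zero 2 hf0)).deriv
  simp only [Prod.mk.eta] at hR
  have hRHS : px (fun p => 2 * Δ p / f p ^ 2) p₀ =
      (2 * (f p₀ * h2 p₀ - g2 p₀ * h0 p₀ + f p₀ * g5 p₀ - 3 * g1 p₀ * g4 p₀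
          + 2 * g2 p₀ * g3 p₀) * f p₀ ^ 2
        - 2 * Δ p₀ * (2 * f p₀ * g1 p₀)) / (f p₀ ^ 2) ^ 2 := hR
  rw [hptu, hu p₀, hpxu p₀ hf0, hpx3, hRHS, hΔ p₀]
  field_simp
  ring

/-- For smooth `f` with `f(x₀,t₀) ≠ 0` and `u = −2(f f_{xx} − f_x²)/f²`, at `(x₀,t₀)` one has
`u_t − 6uu_x + u_{xxx} = −∂ₓ[2(f_{xt}f − f_t f_x + f_{xxxx}f − 4f_{xxx}f_x + 3f_{xx}²)/f²]`;
consequently, if `f` is nowhere zero and solves the bilinear KdV equation everywhere,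
then `u` solves the KdV equation `u_t − 6uu_x + u_{xxx} = 0` everywhere. -/
theorem bilinear_to_kdv
    (f : ℝ × ℝ → ℝ) (hf : ContDiff ℝ (⊤ : ℕ∞) f)
    (x₀ t₀ : ℝ) (hf0 : f (x₀, t₀) ≠ 0)
    (u : ℝ × ℝ → ℝ)
    (hu : ∀ p : ℝ × ℝ, u p = -2 * (f p * (px^[2] f) p - (px f p) ^ 2) / (f p) ^ 2)
    (Δ : ℝ × ℝ → ℝ)
    (hΔ : ∀ p : ℝ × ℝ,
      Δ p = pt (px f) p * f p - pt f p * px f p + (px^[4] f) p * f p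
        - 4 * (px^[3] f) p * px f p + 3 * ((px^[2] f) p) ^ 2) :
    (pt u (x₀, t₀) - 6 * u (x₀, t₀) * px u (x₀, t₀) + (px^[3] u) (x₀, t₀)
      = -(px (fun p => 2 * Δ p / (f p) ^ 2) (x₀, t₀))) ∧
    ((∀ p : ℝ × ℝ, f p ≠ 0) → (∀ p : ℝ × ℝ, Δ p = 0) →
      ∀ p : ℝ × ℝ, pt u p - 6 * u p * px u p + (px^[3] u) p = 0) := by
  have hf1 : ContDiff ℝ (⊤ : ℕ∞) (px f) := contDiff_px hf
  have hf2 : ContDiff ℝ (⊤ : ℕ∞) (px (px f)) := contDiff_px hf1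
  have hf3 : ContDiff ℝ (⊤ : ℕ∞) (px (px (px f))) := contDiff_px hf2
  have hf4 : ContDiff ℝ (⊤ : ℕ∞) (px (px (px (px f)))) := contDiff_px hf3
  have ht0 : ContDiff ℝ (⊤ : ℕ∞) (pt f) := contDiff_pt hf
  have ht1 : ContDiff ℝ (⊤ : ℕ∞) (px (pt f)) := contDiff_px ht0
  have T1 : ∀ p : ℝ × ℝ, HasDerivAt (fun t => px f (p.1, t)) (px (pt f) p) p.2 := by
    intro p
    have h := sliceT hf1 p
    rwa [pt_px_comm hf] at h
  have T2 : ∀ p : ℝ × ℝ, HasDerivAt (fun t => px (px f) (p.1, t)) (px (px (pt f)) p) p.2 := by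
    intro p
    have h := sliceT hf2 p
    rwa [pt_px_comm hf1, pt_px_comm hf] at h
  have hΔ' : ∀ p : ℝ × ℝ,
      Δ p = px (pt f) p * f p - pt f p * px f p + px (px (px (px f))) p * f p
        - 4 * px (px (px f)) p * px f p + 3 * (px (px f) p) ^ 2 := by
    intro p
    rw [hΔ p, pt_px_comm hf]
    rfl
  have main : ∀ p : ℝ × ℝ, f p ≠ 0 →
      pt u p - 6 * u p * px u p + (px^[3] u) p
        = -(px (fun q => 2 * Δ q / (f q) ^ 2) p) := by
    intro p hp
    exact kdv_key f (px f) (px (px f)) (px (px (px f))) (px (px (px (px f))))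
      (px (px (px (px (px f))))) (pt f) (px (pt f)) (px (px (pt f))) u Δ
      (hf.continuous)
      (sliceX hf) (sliceX hf1) (sliceX hf2) (sliceX hf3) (sliceX hf4)
      (sliceX ht0) (sliceX ht1)
      (sliceT hf) T1 T2
      (fun q => hu q) hΔ' p hp
  refine ⟨main (x₀, t₀) hf0, fun hnz hΔ0 p => ?_⟩
  rw [main p (hnz p)]
  have hzero : (fun q => 2 * Δ q / (f q) ^ 2) = fun _ => (0 : ℝ) := by
    funext q
    rw [hΔ0 q]
    simp
  rw [hzero]
  simp [px]
end

section
/- Let N ≥ 3, let φ_1,…,φ_N : ℝ×ℝ → ℝ be smooth functions and λ_{ij} : ℝ → ℝ functions of t such that −∂_x²φ_i = Σ_{j=1}^N λ_{ij}(t) φ_j for all 1 ≤ i ≤ N. Then at every (x,t): (Σ_{i=1}^N λ_{ii}(t)) · (Ŵ{N−1}) = (Ŵ{N−3},N−1,N) − (Ŵ{N−2},N+1). -/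
/-- The determinant `(Φ^{(ord 0)}, Φ^{(ord 1)}, …, Φ^{(ord (N-1))})` whose `j`-th column is
the vector of `x`-derivatives of order `ord j` of `φ_1, …, φ_N`. -/
noncomputable def wdet (N : ℕ) (φ : Fin N → ℝ × ℝ → ℝ) (ord : Fin N → ℕ) (p : ℝ × ℝ) : ℝ :=
  Matrix.det (Matrix.of fun i j : Fin N => (px^[ord j] (φ i)) p)

theorem px_iter_eq (f : ℝ × ℝ → ℝ) (k : ℕ) (p : ℝ × ℝ) :
    (px^[k] f) p = deriv^[k] (fun x => f (x, p.2)) p.1 := by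
  induction k generalizing f p with
  | zero => rfl
  | succ k ih =>
    rw [Function.iterate_succ_apply, Function.iterate_succ_apply]
    exact ih (px f) p

theorem sum_det_updateColumn {N : ℕ} (A B : Matrix (Fin N) (Fin N) ℝ) :
    ∑ k, (B.updateCol k (fun i => (A * B) i k)).det = A.trace * B.det := by
  have h : ∀ k, (B.updateCol k (fun i => (A * B) i k)).det
      = (B.adjugate * (A * B)) k k := by
    intro k
    rw [← Matrix.cramer_apply, Matrix.cramer_eq_adjugate_mulVec]
    simp [Matrix.mulVec, Matrix.mul_apply, dotProduct]
  simp_rw [h]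
  have : ∑ k, (B.adjugate * (A * B)) k k = Matrix.trace (B.adjugate * (A * B)) := rfl
  rw [this, Matrix.trace_mul_comm, Matrix.mul_assoc, Matrix.mul_adjugate]
  simp [Matrix.trace_smul, mul_comm]

theorem iter_deriv_linc {N : ℕ} (f : Fin N → ℝ → ℝ) (hf : ∀ j, ContDiff ℝ (⊤ : ℕ∞) (f j))
    (c : Fin N → ℝ) (k : ℕ) (x : ℝ) :
    deriv^[k] (fun x => ∑ j, c j * f j x) x = ∑ j, c j * deriv^[k] (f j) x := by
  induction k generalizing x with
  | zero => simp
  | succ k ih =>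
    rw [Function.iterate_succ_apply']
    have h1 : deriv^[k] (fun x => ∑ j, c j * f j x)
        = fun x => ∑ j, c j * deriv^[k] (f j) x := funext ih
    rw [h1]
    have hd : ∀ j : Fin N, DifferentiableAt ℝ (deriv^[k] (f j)) x := fun j =>
      (((hf j).iterate_deriv k).differentiable (by simp)).differentiableAt
    rw [deriv_fun_sum (fun j _ => ((hd j).const_mul (c j)))]
    refine Finset.sum_congr rfl fun j _ => ?_
    rw [deriv_const_mul _ (hd j), Function.iterate_succ_apply']

/-- Under `-∂ₓ²φ_i = ∑_j λ_{ij}(t) φ_j`, one has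
`(∑ᵢ λ_{ii}(t)) (Ŵ{N−1}) = (Ŵ{N−3},N−1,N) − (Ŵ{N−2},N+1)`. -/
theorem trace_mul_wronskian_eq
    (N : ℕ) (hN : 3 ≤ N) (φ : Fin N → ℝ × ℝ → ℝ)
    (hφ : ∀ i, ContDiff ℝ (⊤ : ℕ∞) (φ i))
    (lam : Fin N → Fin N → ℝ → ℝ)
    (hcond : ∀ i, ∀ p : ℝ × ℝ, -((px^[2] (φ i)) p) = ∑ j, lam i j p.2 * φ j p) :
    ∀ p : ℝ × ℝ,
      (∑ i, lam i i p.2) * wdet N φ (fun j => (j : ℕ)) p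
        = wdet N φ (fun j => if (j : ℕ) < N - 2 then (j : ℕ) else (j : ℕ) + 1) p
          - wdet N φ (fun j => if (j : ℕ) < N - 1 then (j : ℕ) else (j : ℕ) + 2) p := by
  intro p
  set g : Fin N → ℝ → ℝ := fun i x => φ i (x, p.2) with hgdef
  have hg : ∀ i, ContDiff ℝ (⊤ : ℕ∞) (g i) := fun i =>
    ((hφ i).of_le (by simp)).comp (contDiff_id.prodMk contDiff_const)
  -- base relation
  have hb : ∀ i (x' : ℝ), deriv^[2] (g i) x' = ∑ j, (-(lam i j p.2)) * g j x' := by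
    intro i x'
    have h2 := hcond i (x', p.2)
    rw [px_iter_eq] at h2
    have h3 : ∑ j, (-(lam i j p.2)) * g j x' = -∑ j, lam i j p.2 * φ j (x', p.2) := by
      rw [← Finset.sum_neg_distrib]
      exact Finset.sum_congr rfl fun j _ => by rw [neg_mul]
    rw [h3, ← h2, neg_neg]
  -- iterated relation
  have hkey : ∀ i (k : ℕ) (x' : ℝ),
      deriv^[k + 2] (g i) x' = ∑ j, (-(lam i j p.2)) * deriv^[k] (g j) x' := by
    intro i k x'
    have h0 : deriv^[k + 2] (g i) = deriv^[k] (deriv^[2] (g i)) :=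
      Function.iterate_add_apply deriv k 2 (g i)
    rw [h0, funext (hb i), iter_deriv_linc g hg _ k x']
  -- matrices
  set B : Matrix (Fin N) (Fin N) ℝ :=
    Matrix.of (fun i k : Fin N => deriv^[(k : ℕ)] (g i) p.1) with hB
  set A : Matrix (Fin N) (Fin N) ℝ :=
    Matrix.of (fun i j : Fin N => -(lam i j p.2)) with hA
  have hAB : ∀ (i k : Fin N), (A * B) i k = deriv^[(k : ℕ) + 2] (g i) p.1 := by
    intro i k
    rw [hkey i k p.1]
    simp [Matrix.mul_apply, hA, hB]
  have hN2 : N - 2 < N := by omega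
  have hN1 : N - 1 < N := by omega
  set a : Fin N := ⟨N - 2, hN2⟩ with ha
  set b : Fin N := ⟨N - 1, hN1⟩ with hbb
  have hav : (a : ℕ) = N - 2 := rfl
  have hbv : (b : ℕ) = N - 1 := rfl
  have hab : a ≠ b := by
    intro h
    have := congrArg Fin.val h
    rw [hav, hbv] at this
    omega
  -- the three wdet's as matrix determinants
  have hw0 : wdet N φ (fun j => (j : ℕ)) p = B.det := by
    unfold wdet; congr 1; funext i j; simp [hB, px_iter_eq, hgdef]
  set C1 : Matrix (Fin N) (Fin N) ℝ :=
    Matrix.of (fun i j : Fin N =>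
      deriv^[if (j : ℕ) < N - 2 then (j : ℕ) else (j : ℕ) + 1] (g i) p.1) with hC1
  set C2 : Matrix (Fin N) (Fin N) ℝ :=
    Matrix.of (fun i j : Fin N =>
      deriv^[if (j : ℕ) < N - 1 then (j : ℕ) else (j : ℕ) + 2] (g i) p.1) with hC2
  have hw1 : wdet N φ (fun j => if (j : ℕ) < N - 2 then (j : ℕ) else (j : ℕ) + 1) p
      = C1.det := by
    unfold wdet; congr 1; funext i j; simp [hC1, px_iter_eq, hgdef]
  have hw2 : wdet N φ (fun j => if (j : ℕ) < N - 1 then (j : ℕ) else (j : ℕ) + 2) p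
      = C2.det := by
    unfold wdet; congr 1; funext i j; simp [hC2, px_iter_eq, hgdef]
  -- evaluate each updated determinant
  have hterm : ∀ k : Fin N,
      (B.updateCol k (fun i => (A * B) i k)).det
        = (if k = a then -C1.det else 0) + (if k = b then C2.det else 0) := by
    intro k
    by_cases hka : k = a
    · subst hka
      rw [if_pos rfl, if_neg hab, add_zero]
      have hswap : B.updateCol a (fun i => (A * B) i a)
          = C1.submatrix id (Equiv.swap a b) := by
        funext i j
        rw [Matrix.updateCol_apply]
        by_cases hja : j = a
        · subst hja
          rw [if_pos rfl, hAB]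
          simp only [Matrix.submatrix_apply, id_eq, Equiv.swap_apply_left, hC1,
            Matrix.of_apply]
          rw [if_neg (by omega : ¬ ((b : ℕ) < N - 2))]
          exact congrArg (fun m => deriv^[m] (g i) p.1)
            (by rw [hav, hbv]; omega : (a : ℕ) + 2 = (b : ℕ) + 1)
        · rw [if_neg hja]
          by_cases hjb : j = b
          · subst hjb
            simp only [Matrix.submatrix_apply, id_eq, Equiv.swap_apply_right, hC1,
              Matrix.of_apply, hB]
            rw [if_neg (by omega : ¬ ((a : ℕ) < N - 2))]
            exact congrArg (fun m => deriv^[m] (g i) p.1)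
              (by rw [hav, hbv]; omega : (b : ℕ) = (a : ℕ) + 1)
          · have hsw : Equiv.swap a b j = j := Equiv.swap_apply_of_ne_of_ne hja hjb
            simp only [Matrix.submatrix_apply, id_eq, hsw, hC1, Matrix.of_apply, hB]
            have hj : (j : ℕ) < N - 2 := by
              have h1 : (j : ℕ) ≠ (a : ℕ) := fun h => hja (Fin.ext h)
              have h2 : (j : ℕ) ≠ (b : ℕ) := fun h => hjb (Fin.ext h)
              have := j.2; omega
            rw [if_pos hj]
      rw [hswap, Matrix.det_permute', Equiv.Perm.sign_swap hab]
      simp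
    · rw [if_neg hka]
      by_cases hkb : k = b
      · subst hkb
        rw [if_pos rfl, zero_add]
        congr 1
        funext i j
        rw [Matrix.updateCol_apply]
        by_cases hjb : j = b
        · subst hjb
          rw [if_pos rfl, hAB]
          simp only [hC2, Matrix.of_apply]
          rw [if_neg (by omega : ¬ ((b : ℕ) < N - 1))]
        · rw [if_neg hjb]
          simp only [hC2, Matrix.of_apply, hB]
          have hj : (j : ℕ) < N - 1 := by
            have h2 : (j : ℕ) ≠ (b : ℕ) := fun h => hjb (Fin.ext h)
            have := j.2; omega
          rw [if_pos hj]
      · rw [if_neg hkb, add_zero]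
        have hklt : (k : ℕ) + 2 < N := by
          have h1 : (k : ℕ) ≠ (a : ℕ) := fun h => hka (Fin.ext h)
          have h2 : (k : ℕ) ≠ (b : ℕ) := fun h => hkb (Fin.ext h)
          have := k.2; omega
        set k2 : Fin N := ⟨(k : ℕ) + 2, hklt⟩ with hk2
        have hk2v : (k2 : ℕ) = (k : ℕ) + 2 := rfl
        have hne : k ≠ k2 := by
          intro h
          have := congrArg Fin.val h
          rw [hk2v] at this
          omega
        refine Matrix.det_zero_of_column_eq hne fun i => ?_
        rw [Matrix.updateCol_apply, Matrix.updateCol_apply,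
          if_pos rfl, if_neg (Ne.symm hne), hAB]
        simp only [hB, Matrix.of_apply, hk2v]
  have hsum := sum_det_updateColumn A B
  rw [Finset.sum_congr rfl (fun k _ => hterm k), Finset.sum_add_distrib,
    Finset.sum_ite_eq' Finset.univ a (fun _ => -C1.det),
    Finset.sum_ite_eq' Finset.univ b (fun _ => C2.det)] at hsum
  simp only [Finset.mem_univ, if_pos] at hsum
  have htr : A.trace = -(∑ i, lam i i p.2) := by
    simp [Matrix.trace, hA, Matrix.diag]
  rw [htr] at hsum
  rw [hw0, hw1, hw2]
  linarith
end

section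
/- Let N ≥ 5, let φ_1,…,φ_N : ℝ×ℝ → ℝ be smooth functions and λ_{ij} : ℝ → ℝ functions of t such that −∂_x²φ_i = Σ_{j=1}^N λ_{ij}(t) φ_j for all 1 ≤ i ≤ N. Then at every (x,t): (Σ_{i=1}^N λ_{ii}(t)) · (Ŵ{N−3},N−1,N) = (Ŵ{N−5},N−3,N−2,N−1,N) + (Ŵ{N−3},N,N+1) − (Ŵ{N−3},N−1,N+2). -/
lemma hasDerivAt_px' {f : ℝ × ℝ → ℝ} (hf : ContDiff ℝ (⊤ : ℕ∞) f) (p : ℝ × ℝ) :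
    HasDerivAt (fun x => f (x, p.2)) (fderiv ℝ f p ((1 : ℝ), (0 : ℝ))) p.1 := by
  have h1 : HasDerivAt (fun x : ℝ => (x, p.2)) ((1 : ℝ), (0 : ℝ)) p.1 :=
    (hasDerivAt_id p.1).prodMk (hasDerivAt_const _ _)
  have hF : HasFDerivAt f (fderiv ℝ f p) (p.1, p.2) := by
    rw [Prod.mk.eta]; exact (hf.differentiable (by simp) p).hasFDerivAt
  exact hF.comp_hasDerivAt p.1 h1

lemma px_eq_fderiv_s4 {f : ℝ × ℝ → ℝ} (hf : ContDiff ℝ (⊤ : ℕ∞) f) (p : ℝ × ℝ) :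
    px f p = fderiv ℝ f p ((1 : ℝ), (0 : ℝ)) :=
  (hasDerivAt_px' hf p).deriv

lemma hasDerivAt_px {f : ℝ × ℝ → ℝ} (hf : ContDiff ℝ (⊤ : ℕ∞) f) (p : ℝ × ℝ) :
    HasDerivAt (fun x => f (x, p.2)) (px f p) p.1 := by
  rw [px_eq_fderiv_s4 hf p]; exact hasDerivAt_px' hf p

lemma contDiff_px_s4 {f : ℝ × ℝ → ℝ} (hf : ContDiff ℝ (⊤ : ℕ∞) f) : ContDiff ℝ (⊤ : ℕ∞) (px f) := by
  have h : px f = fun p => fderiv ℝ f p ((1 : ℝ), (0 : ℝ)) :=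
    funext fun p => px_eq_fderiv_s4 hf p
  rw [h]
  exact (hf.fderiv_right (by simp)).clm_apply contDiff_const

lemma contDiff_px_iter {f : ℝ × ℝ → ℝ} (hf : ContDiff ℝ (⊤ : ℕ∞) f) (k : ℕ) :
    ContDiff ℝ (⊤ : ℕ∞) (px^[k] f) := by
  induction k with
  | zero => exact hf
  | succ k ih => rw [Function.iterate_succ_apply']; exact contDiff_px_s4 ih

lemma sum_det_updateColumn_mul {n : Type*} [Fintype n] [DecidableEq n]
    (A M : Matrix n n ℝ) :
    ∑ j, (M.updateCol j (fun i => (A * M) i j)).det = Matrix.trace A * M.det := by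
  have h : ∀ j, (M.updateCol j (fun i => (A * M) i j)).det
      = (M.adjugate * (A * M)) j j := by
    intro j
    rw [← Matrix.cramer_apply, Matrix.cramer_eq_adjugate_mulVec]
    rfl
  calc ∑ j, (M.updateCol j (fun i => (A * M) i j)).det
      = Matrix.trace (M.adjugate * (A * M)) := by
        rw [Matrix.trace]; exact Finset.sum_congr rfl fun j _ => h j
    _ = Matrix.trace ((A * M) * M.adjugate) := Matrix.trace_mul_comm _ _
    _ = Matrix.trace (A * (M * M.adjugate)) := by rw [Matrix.mul_assoc]
    _ = Matrix.trace (A * (M.det • (1 : Matrix n n ℝ))) := by rw [Matrix.mul_adjugate]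
    _ = Matrix.trace A * M.det := by
        rw [Matrix.mul_smul, Matrix.mul_one, Matrix.trace_smul, smul_eq_mul, mul_comm]

lemma hcond_iter (N : ℕ) (φ : Fin N → ℝ × ℝ → ℝ) (hφ : ∀ i, ContDiff ℝ (⊤ : ℕ∞) (φ i))
    (lam : Fin N → Fin N → ℝ → ℝ)
    (hcond : ∀ i, ∀ p : ℝ × ℝ, -((px^[2] (φ i)) p) = ∑ j, lam i j p.2 * φ j p) :
    ∀ (k : ℕ) (i : Fin N) (p : ℝ × ℝ),
      px^[k + 2] (φ i) p = -∑ j, lam i j p.2 * px^[k] (φ j) p := by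
  intro k
  induction k with
  | zero =>
    intro i p
    have h := hcond i p
    simp only [Function.iterate_zero, id_eq, Nat.zero_add]
    linarith [h]
  | succ k ih =>
    intro i p
    have hgk : ∀ j : Fin N, HasDerivAt (fun x => px^[k] (φ j) (x, p.2))
        (px^[k + 1] (φ j) p) p.1 := by
      intro j
      have h := hasDerivAt_px (contDiff_px_iter (hφ j) k) p
      rw [Function.iterate_succ_apply']
      exact h
    have hsum : HasDerivAt (fun x => -∑ j, lam i j p.2 * px^[k] (φ j) (x, p.2))
        (-∑ j, lam i j p.2 * px^[k + 1] (φ j) p) p.1 :=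
      (HasDerivAt.fun_sum fun j _ => (hgk j).const_mul (lam i j p.2)).neg
    have hfun : px^[k + 2] (φ i) = fun q => -∑ j, lam i j q.2 * px^[k] (φ j) q :=
      funext fun q => ih i q
    calc px^[k + 1 + 2] (φ i) p = px (px^[k + 2] (φ i)) p := by
          rw [show k + 1 + 2 = (k + 2) + 1 from rfl, Function.iterate_succ_apply']
      _ = -∑ j, lam i j p.2 * px^[k + 1] (φ j) p := by
          rw [hfun]
          exact hsum.deriv

/-- Under `-∂ₓ²φ_i = ∑_j λ_{ij}(t) φ_j`, one has
`(∑ᵢ λ_{ii}(t)) (Ŵ{N−3},N−1,N)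
  = (Ŵ{N−5},N−3,N−2,N−1,N) + (Ŵ{N−3},N,N+1) − (Ŵ{N−3},N−1,N+2)`. -/
theorem trace_mul_wdet_eq
    (N : ℕ) (hN : 5 ≤ N) (φ : Fin N → ℝ × ℝ → ℝ)
    (hφ : ∀ i, ContDiff ℝ (⊤ : ℕ∞) (φ i))
    (lam : Fin N → Fin N → ℝ → ℝ)
    (hcond : ∀ i, ∀ p : ℝ × ℝ, -((px^[2] (φ i)) p) = ∑ j, lam i j p.2 * φ j p) :
    ∀ p : ℝ × ℝ,
      (∑ i, lam i i p.2)
          * wdet N φ (fun j => if (j : ℕ) < N - 2 then (j : ℕ) else (j : ℕ) + 1) p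
        = wdet N φ (fun j => if (j : ℕ) < N - 4 then (j : ℕ) else (j : ℕ) + 1) p
          + wdet N φ (fun j => if (j : ℕ) < N - 2 then (j : ℕ) else (j : ℕ) + 2) p
          - wdet N φ (fun j => if (j : ℕ) < N - 2 then (j : ℕ)
              else if (j : ℕ) < N - 1 then (j : ℕ) + 1 else (j : ℕ) + 3) p := by
  classical
  intro p
  -- the order functions
  set ord0 : Fin N → ℕ := fun j => if (j : ℕ) < N - 2 then (j : ℕ) else (j : ℕ) + 1 with hord0
  set ord1 : Fin N → ℕ := fun j => if (j : ℕ) < N - 4 then (j : ℕ) else (j : ℕ) + 1 with hord1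
  set ord2 : Fin N → ℕ := fun j => if (j : ℕ) < N - 2 then (j : ℕ) else (j : ℕ) + 2 with hord2
  set ord3 : Fin N → ℕ := fun j => if (j : ℕ) < N - 2 then (j : ℕ)
      else if (j : ℕ) < N - 1 then (j : ℕ) + 1 else (j : ℕ) + 3 with hord3
  -- matrices indexed by an order function
  set E : (Fin N → ℕ) → Matrix (Fin N) (Fin N) ℝ :=
    fun o => Matrix.of fun i j : Fin N => (px^[o j] (φ i)) p with hE
  have hwdet : ∀ o : Fin N → ℕ, wdet N φ o p = (E o).det := fun o => rfl
  set A : Matrix (Fin N) (Fin N) ℝ := Matrix.of fun i j => lam i j p.2 with hA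
  -- updateColumn of E
  have hupd : ∀ (o : Fin N → ℕ) (j : Fin N) (m : ℕ),
      (E o).updateCol j (fun i => px^[m] (φ i) p) = E (Function.update o j m) := by
    intro o j m
    ext i j'
    simp only [Matrix.updateCol_apply, Matrix.of_apply, Function.update_apply, hE]
    by_cases h : j' = j <;> simp [h]
  -- swap of columns
  have hswap : ∀ (o : Fin N → ℕ) (u v : Fin N), u ≠ v →
      (E (o ∘ (Equiv.swap u v))).det = -(E o).det := by
    intro o u v huv
    have h1 : E (o ∘ (Equiv.swap u v)) = (E o).submatrix id (Equiv.swap u v) := by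
      ext i j; rfl
    rw [h1, Matrix.det_permute', Equiv.Perm.sign_swap huv]
    simp
  -- the product A * E ord0
  have hIT := hcond_iter N φ hφ lam hcond
  have hAM : ∀ j : Fin N, (fun i => (A * E ord0) i j)
      = fun i => -(px^[ord0 j + 2] (φ i) p) := by
    intro j
    funext i
    have h := hIT (ord0 j) i p
    simp only [Matrix.mul_apply, hA, hE, Matrix.of_apply]
    rw [h, neg_neg]
  -- D j
  set D : Fin N → ℝ := fun j => (E (Function.update ord0 j (ord0 j + 2))).det with hD
  have hterm : ∀ j : Fin N,
      ((E ord0).updateCol j (fun i => (A * E ord0) i j)).det = -(D j) := by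
    intro j
    rw [hAM j]
    have hv : (fun i => -(px^[ord0 j + 2] (φ i) p))
        = (-1 : ℝ) • (fun i => px^[ord0 j + 2] (φ i) p) := by
      funext i; simp
    rw [hv, Matrix.det_updateCol_smul, hupd]
    simp [hD]
  have key := sum_det_updateColumn_mul A (E ord0)
  have htr : Matrix.trace A = ∑ i, lam i i p.2 := by
    simp [Matrix.trace, hA, Matrix.diag]
  -- distinguished indices
  have h4 : N - 4 < N := by omega
  have h3 : N - 3 < N := by omega
  have h2 : N - 2 < N := by omega
  have h1 : N - 1 < N := by omega
  set a : Fin N := ⟨N - 4, h4⟩ with ha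
  set b : Fin N := ⟨N - 3, h3⟩ with hb
  set c : Fin N := ⟨N - 2, h2⟩ with hc
  set d : Fin N := ⟨N - 1, h1⟩ with hd
  have hab : a ≠ b := by
    simp only [ha, hb, Ne, Fin.ext_iff, Fin.val_mk]; omega
  have hcd : c ≠ d := by
    simp only [hc, hd, Ne, Fin.ext_iff, Fin.val_mk]; omega
  -- zero columns
  have hzero : ∀ j j2 : Fin N, j2 ≠ j →
      ord0 j2 = ord0 j + 2 → D j = 0 := by
    intro j j2 hne he
    simp only [hD]
    refine Matrix.det_zero_of_column_eq hne.symm fun k => ?_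
    simp [hE, Function.update_apply, hne, he]
  have hD0 : ∀ j : Fin N, j ≠ a → j ≠ c → j ≠ d → D j = 0 := by
    intro j hja hjc hjd
    have hjv := j.isLt
    have hja' : (j : ℕ) ≠ N - 4 := fun h => hja (Fin.ext h)
    have hjc' : (j : ℕ) ≠ N - 2 := fun h => hjc (Fin.ext h)
    have hjd' : (j : ℕ) ≠ N - 1 := fun h => hjd (Fin.ext h)
    rcases lt_or_ge (j : ℕ) (N - 4) with hlt | hge
    · -- duplicate with column j+2
      have hj2 : (j : ℕ) + 2 < N := by omega
      refine hzero j ⟨(j : ℕ) + 2, hj2⟩ ?_ ?_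
      · simp only [Ne, Fin.ext_iff, Fin.val_mk]; omega
      · simp only [hord0, Fin.val_mk]
        split_ifs <;> omega
    · -- j = N - 3, duplicate with column c
      have hjb : (j : ℕ) = N - 3 := by omega
      refine hzero j c ?_ ?_
      · simp only [hc, Ne, Fin.ext_iff, Fin.val_mk]; omega
      · simp only [hord0, hc, Fin.val_mk]
        split_ifs <;> omega
  -- value at a
  have hDa : D a = -(E ord1).det := by
    have horder : Function.update ord0 a (ord0 a + 2) = ord1 ∘ (Equiv.swap a b) := by
      funext j
      have hj := j.isLt
      simp only [Function.update_apply, Function.comp_apply, Equiv.swap_apply_def,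
        hord0, hord1, ha, hb, Fin.ext_iff, Fin.val_mk]
      split_ifs <;> (try simp only [Fin.val_mk] at *) <;> omega
    simp only [hD]
    rw [horder, hswap ord1 a b hab]
  -- value at c
  have hDc : D c = -(E ord2).det := by
    have horder : Function.update ord0 c (ord0 c + 2) = ord2 ∘ (Equiv.swap c d) := by
      funext j
      have hj := j.isLt
      simp only [Function.update_apply, Function.comp_apply, Equiv.swap_apply_def,
        hord0, hord2, hc, hd, Fin.ext_iff, Fin.val_mk]
      split_ifs <;> (try simp only [Fin.val_mk] at *) <;> omega
    simp only [hD]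
    rw [horder, hswap ord2 c d hcd]
  -- value at d
  have hDd : D d = (E ord3).det := by
    have horder : Function.update ord0 d (ord0 d + 2) = ord3 := by
      funext j
      have hj := j.isLt
      simp only [Function.update_apply, hord0, hord3, hd, Fin.ext_iff, Fin.val_mk]
      split_ifs <;> (try simp only [Fin.val_mk] at *) <;> omega
    simp only [hD]
    rw [horder]
  -- sum over Fin N
  have hsumD : ∑ j, D j = D a + D c + D d := by
    have hsub : ∑ j ∈ ({a, c, d} : Finset (Fin N)), D j = ∑ j, D j := by
      apply Finset.sum_subset (Finset.subset_univ _)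
      intro x _ hx
      simp only [Finset.mem_insert, Finset.mem_singleton, not_or] at hx
      exact hD0 x hx.1 hx.2.1 hx.2.2
    have hac : a ≠ c := by
      simp only [ha, hc, Ne, Fin.ext_iff, Fin.val_mk]; omega
    have had : a ≠ d := by
      simp only [ha, hd, Ne, Fin.ext_iff, Fin.val_mk]; omega
    rw [← hsub]
    rw [Finset.sum_insert (by simp [Finset.mem_insert, hac, had]),
      Finset.sum_insert (by simp [hcd]), Finset.sum_singleton]
    ring
  -- conclude
  rw [hwdet, hwdet, hwdet, hwdet, ← htr]
  calc Matrix.trace A * (E ord0).det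
      = ∑ j, ((E ord0).updateCol j (fun i => (A * E ord0) i j)).det := key.symm
    _ = ∑ j, -(D j) := Finset.sum_congr rfl fun j _ => hterm j
    _ = -(∑ j, D j) := by rw [Finset.sum_neg_distrib]
    _ = -(D a + D c + D d) := by rw [hsumD]
    _ = (E ord1).det + (E ord2).det - (E ord3).det := by
        rw [hDa, hDc, hDd]; ring
end

section
/- Let N ≥ 5, let φ_1,…,φ_N : ℝ×ℝ → ℝ be smooth functions and λ_{ij} : ℝ → ℝ functions of t such that −∂_x²φ_i = Σ_{j=1}^N λ_{ij}(t) φ_j for all 1 ≤ i ≤ N. Then at every (x,t): (Σ_{i=1}^N λ_{ii}(t))² · (Ŵ{N−1}) = (Ŵ{N−5},N−3,N−2,N−1,N) − (Ŵ{N−4},N−2,N−1,N+1) − (Ŵ{N−3},N−1,N+2) + 2 (Ŵ{N−3},N,N+1) + (Ŵ{N−2},N+3). -/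
namespace WAux
open Matrix

variable {N : ℕ}

noncomputable def D (w : Fin N → Fin N → ℝ) : ℝ := (Matrix.of w).det

lemma of_update (w : Fin N → Fin N → ℝ) (a : Fin N) (b : Fin N → ℝ) :
    Matrix.of (Function.update w a b) = (Matrix.of w).updateRow a b := by
  ext i j
  by_cases h : i = a <;> simp [h, Matrix.updateRow_apply, Function.update_apply]

lemma D_eq_zero {w : Fin N → Fin N → ℝ} {a b : Fin N} (hab : a ≠ b) (hw : w a = w b) :
    D w = 0 :=
  Matrix.det_zero_of_row_eq hab (by exact hw)

lemma D_update_neg (w : Fin N → Fin N → ℝ) (a : Fin N) (b : Fin N → ℝ) :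
    D (Function.update w a (-b)) = - D (Function.update w a b) := by
  have h : (-b) = (-1 : ℝ) • b := by funext k; simp
  rw [D, of_update, h, Matrix.det_updateRow_smul, D, of_update]
  simp

lemma det_updateRow_eq (M : Matrix (Fin N) (Fin N) ℝ) (j : Fin N) (b : Fin N → ℝ) :
    (M.updateRow j b).det = ∑ i, M.adjugate i j * b i := by
  rw [← Matrix.det_transpose, ← Matrix.updateCol_transpose, ← Matrix.cramer_apply,
    Matrix.cramer_eq_adjugate_mulVec, ← Matrix.adjugate_transpose]
  simp [Matrix.mulVec, dotProduct, mul_comm]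

lemma D_trace (Λ : Matrix (Fin N) (Fin N) ℝ) (w : Fin N → Fin N → ℝ) :
    Λ.trace * D w = ∑ j, D (Function.update w j (Λ.mulVec (w j))) := by
  have h1 : ∀ j, D (Function.update w j (Λ.mulVec (w j)))
      = ∑ i, (Matrix.of w).adjugate i j * (∑ l, Λ i l * w j l) := by
    intro j
    rw [D, of_update, det_updateRow_eq]
    simp [Matrix.mulVec, dotProduct]
  rw [Finset.sum_congr rfl fun j _ => h1 j]
  have h2 : ∑ j, ∑ i, (Matrix.of w).adjugate i j * (∑ l, Λ i l * w j l)
      = ∑ i, ∑ l, Λ i l * ∑ j, (Matrix.of w).adjugate i j * (Matrix.of w) j l := by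
    rw [Finset.sum_comm]
    refine Finset.sum_congr rfl fun i _ => ?_
    simp only [Finset.mul_sum]
    rw [Finset.sum_comm]
    refine Finset.sum_congr rfl fun j _ => ?_
    exact Finset.sum_congr rfl fun l _ => by simp [Matrix.of_apply]; ring
  rw [h2]
  have h3 : ∀ i l, ∑ j, (Matrix.of w).adjugate i j * (Matrix.of w) j l
      = (Matrix.of w).det * (if i = l then (1:ℝ) else 0) := by
    intro i l
    have := congrArg (fun M => M i l) (Matrix.adjugate_mul (Matrix.of w))
    simpa [Matrix.mul_apply, Matrix.one_apply] using this
  simp only [h3]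
  simp only [mul_ite, mul_one, mul_zero, Finset.sum_ite_eq', Finset.mem_univ, if_true]
  rw [Matrix.trace, Finset.sum_mul]
  refine Finset.sum_congr rfl fun i _ => ?_
  rw [Finset.sum_ite_eq]
  simp [Matrix.diag, D]

lemma D_comp_swap {a b : Fin N} (hab : a ≠ b) (w : Fin N → Fin N → ℝ) :
    D (fun j => w (Equiv.swap a b j)) = - D w := by
  have := Matrix.det_permute (Equiv.swap a b) (Matrix.of w)
  simp only [Equiv.Perm.sign_swap hab] at this
  have e : (Matrix.of w).submatrix (⇑(Equiv.swap a b)) id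
      = Matrix.of (fun j => w (Equiv.swap a b j)) := by
    ext i j; simp [Matrix.submatrix_apply]
  rw [e] at this
  rw [D, this, D]
  simp

lemma D_swap_outer {a b : Fin N} (hab : a ≠ b) (u : Fin N → Fin N → ℝ)
    (g : Fin N → Fin N) :
    D (fun j => u (g (Equiv.swap a b j))) = - D (fun j => u (g j)) :=
  D_comp_swap hab (fun j => u (g j))

lemma key (hN : 5 ≤ N) (Λ : Matrix (Fin N) (Fin N) ℝ) (v : ℕ → Fin N → ℝ)
    (hv : ∀ k, v (k + 2) = -(Λ.mulVec (v k))) :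
    Λ.trace ^ 2 * D (fun j : Fin N => v (j : ℕ))
      = D (fun j : Fin N => v (if (j:ℕ) < N-4 then (j:ℕ) else (j:ℕ)+1))
        - D (fun j : Fin N => v (if (j:ℕ) < N-3 then (j:ℕ)
            else if (j:ℕ) < N-1 then (j:ℕ)+1 else (j:ℕ)+2))
        - D (fun j : Fin N => v (if (j:ℕ) < N-2 then (j:ℕ)
            else if (j:ℕ) < N-1 then (j:ℕ)+1 else (j:ℕ)+3))
        + 2 * D (fun j : Fin N => v (if (j:ℕ) < N-2 then (j:ℕ) else (j:ℕ)+2))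
        + D (fun j : Fin N => v (if (j:ℕ) < N-1 then (j:ℕ) else (j:ℕ)+4)) := by
  have hΛv : ∀ k, Λ.mulVec (v k) = -(v (k+2)) := fun k => by rw [hv k]; simp
  obtain ⟨n4, c4⟩ : ∃ m : Fin N, (m:ℕ) = N-4 := ⟨⟨N-4, by omega⟩, rfl⟩
  obtain ⟨n3, c3⟩ : ∃ m : Fin N, (m:ℕ) = N-3 := ⟨⟨N-3, by omega⟩, rfl⟩
  obtain ⟨n2, c2⟩ : ∃ m : Fin N, (m:ℕ) = N-2 := ⟨⟨N-2, by omega⟩, rfl⟩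
  obtain ⟨n1, c1⟩ : ∃ m : Fin N, (m:ℕ) = N-1 := ⟨⟨N-1, by omega⟩, rfl⟩
  have d43 : n4 ≠ n3 := Fin.ne_of_val_ne (by rw [c4, c3]; omega)
  have d42 : n4 ≠ n2 := Fin.ne_of_val_ne (by rw [c4, c2]; omega)
  have d41 : n4 ≠ n1 := Fin.ne_of_val_ne (by rw [c4, c1]; omega)
  have d32 : n3 ≠ n2 := Fin.ne_of_val_ne (by rw [c3, c2]; omega)
  have d31 : n3 ≠ n1 := Fin.ne_of_val_ne (by rw [c3, c1]; omega)
  have d21 : n2 ≠ n1 := Fin.ne_of_val_ne (by rw [c2, c1]; omega)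
  set w0 : Fin N → Fin N → ℝ := fun j => v (j:ℕ) with hw0
  set a2 : Fin N → ℝ := Λ.mulVec (v (N-2)) with ha2def
  set a1 : Fin N → ℝ := Λ.mulVec (v (N-1)) with ha1def
  have hnn2 : N - 2 + 2 = N := by omega
  have hnn1 : N - 1 + 2 = N + 1 := by omega
  have ha2 : a2 = -(v N) := by rw [ha2def, hΛv, hnn2]
  have ha1 : a1 = -(v (N+1)) := by rw [ha1def, hΛv, hnn1]
  have ha2' : Λ.mulVec a2 = v (N+2) := by
    rw [ha2, Matrix.mulVec_neg, hΛv]; simp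
  have ha1' : Λ.mulVec a1 = v (N+3) := by
    rw [ha1, Matrix.mulVec_neg, hΛv]
    norm_num
  set w2 : Fin N → Fin N → ℝ := Function.update w0 n2 a2 with hw2
  set w1 : Fin N → Fin N → ℝ := Function.update w0 n1 a1 with hw1
  set T4 : ℝ := D (Function.update w2 n1 a1) with hT4
  have hw0at : ∀ j : Fin N, w0 j = v (j:ℕ) := fun j => rfl
  have w0n4 : w0 n4 = v (N-4) := by rw [hw0at, c4]
  have w0n3 : w0 n3 = v (N-3) := by rw [hw0at, c3]
  have w0n2 : w0 n2 = v (N-2) := by rw [hw0at, c2]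
  have w0n1 : w0 n1 = v (N-1) := by rw [hw0at, c1]
  have w2n1 : w2 n1 = v (N-1) := by
    rw [hw2, Function.update_of_ne (Ne.symm d21), w0n1]
  have w1n2 : w1 n2 = v (N-2) := by
    rw [hw1, Function.update_of_ne d21, w0n2]
  -- Step 1
  have step1 : Λ.trace * D w0 = D w2 + D w1 := by
    rw [D_trace]
    have hterm : ∀ j : Fin N, D (Function.update w0 j (Λ.mulVec (w0 j)))
        = (if j = n2 then D w2 else 0) + (if j = n1 then D w1 else 0) := by
      intro j
      by_cases h2 : n2 = j
      · subst h2
        rw [if_pos rfl, if_neg d21]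
        simp only [add_zero]
        rw [hw2, w0n2, ha2def]
      · by_cases h1 : n1 = j
        · subst h1
          rw [if_pos rfl, if_neg (Ne.symm h2)]
          simp only [zero_add]
          rw [hw1, w0n1, ha1def]
        · rw [if_neg (Ne.symm h2), if_neg (Ne.symm h1)]
          simp only [add_zero]
          have hjv2 : (j:ℕ) ≠ N-2 := fun hh => h2 (Fin.ext (c2.trans hh.symm))
          have hjv1 : (j:ℕ) ≠ N-1 := fun hh => h1 (Fin.ext (c1.trans hh.symm))
          have hb : (j:ℕ)+2 < N := by have := j.isLt; omega
          rw [hw0at j, hΛv, D_update_neg]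
          have hz : D (Function.update w0 j (v ((j:ℕ)+2))) = 0 := by
            refine D_eq_zero (a := j) (b := ⟨(j:ℕ)+2, hb⟩)
              (Fin.ne_of_val_ne (by simp)) ?_
            rw [Function.update_self, Function.update_of_ne (Fin.ne_of_val_ne (by simp))]
          rw [hz, neg_zero]
    rw [Finset.sum_congr rfl fun j _ => hterm j, Finset.sum_add_distrib]
    simp [Finset.sum_ite_eq']
  -- Step 2
  have step2 : Λ.trace * D w2 = D (Function.update w0 n4 a2)
      + D (Function.update w0 n2 (v (N+2))) + T4 := by
    rw [D_trace]
    have hterm : ∀ j : Fin N, D (Function.update w2 j (Λ.mulVec (w2 j)))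
        = (if j = n4 then D (Function.update w0 n4 a2) else 0)
          + (if j = n2 then D (Function.update w0 n2 (v (N+2))) else 0)
          + (if j = n1 then T4 else 0) := by
      intro j
      by_cases h4 : n4 = j
      · subst h4
        rw [if_pos rfl, if_neg d42, if_neg d41]
        simp only [add_zero]
        have e1 : w2 n4 = v (N-4) := by
          rw [hw2, Function.update_of_ne d42, w0n4]
        rw [e1, hΛv, show N-4+2 = N-2 from by omega, D_update_neg]
        have hcomp : (fun j => (Function.update w2 n4 (v (N-2))) (Equiv.swap n4 n2 j))
            = Function.update w0 n4 a2 := by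
          funext j
          rcases eq_or_ne n4 j with rfl | hj4
          · show (Function.update w2 n4 (v (N-2))) (Equiv.swap n4 n2 n4) = _
            rw [Equiv.swap_apply_left, Function.update_self,
              Function.update_of_ne (Ne.symm d42), hw2, Function.update_self]
          rcases eq_or_ne n2 j with rfl | hj2
          · show (Function.update w2 n4 (v (N-2))) (Equiv.swap n4 n2 n2) = _
            rw [Equiv.swap_apply_right, Function.update_self,
              Function.update_of_ne (Ne.symm d42), w0n2]
          · show (Function.update w2 n4 (v (N-2))) (Equiv.swap n4 n2 j) = _
            rw [Equiv.swap_apply_of_ne_of_ne (Ne.symm hj4) (Ne.symm hj2),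
              Function.update_of_ne (Ne.symm hj4), Function.update_of_ne (Ne.symm hj4),
              hw2, Function.update_of_ne (Ne.symm hj2)]
        rw [← hcomp, D_comp_swap d42]
      · by_cases h3 : n3 = j
        · subst h3
          rw [if_neg (Ne.symm d43), if_neg d32, if_neg d31]
          simp only [add_zero, zero_add]
          have e1 : w2 n3 = v (N-3) := by
            rw [hw2, Function.update_of_ne d32, w0n3]
          rw [e1, hΛv, show N-3+2 = N-1 from by omega, D_update_neg]
          have hz : D (Function.update w2 n3 (v (N-1))) = 0 := by
            refine D_eq_zero (a := n3) (b := n1) d31 ?_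
            rw [Function.update_self, Function.update_of_ne (Ne.symm d31), w2n1]
          rw [hz, neg_zero]
        · by_cases h2 : n2 = j
          · subst h2
            rw [if_neg (Ne.symm d42), if_pos rfl, if_neg d21]
            simp only [add_zero, zero_add]
            have e1 : w2 n2 = a2 := by rw [hw2, Function.update_self]
            rw [e1, ha2', hw2, Function.update_idem]
          · by_cases h1 : n1 = j
            · subst h1
              rw [if_neg (Ne.symm d41), if_neg (Ne.symm d21), if_pos rfl]
              simp only [zero_add]
              rw [w2n1, hT4, ha1def]
            · rw [if_neg (Ne.symm h4), if_neg (Ne.symm h2), if_neg (Ne.symm h1)]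
              simp only [add_zero]
              have hjv4 : (j:ℕ) ≠ N-4 := fun hh => h4 (Fin.ext (c4.trans hh.symm))
              have hjv3 : (j:ℕ) ≠ N-3 := fun hh => h3 (Fin.ext (c3.trans hh.symm))
              have hjv2 : (j:ℕ) ≠ N-2 := fun hh => h2 (Fin.ext (c2.trans hh.symm))
              have hjv1 : (j:ℕ) ≠ N-1 := fun hh => h1 (Fin.ext (c1.trans hh.symm))
              have hj5 : (j:ℕ) ≤ N-5 := by have := j.isLt; omega
              have hb : (j:ℕ)+2 < N := by omega
              have e1 : w2 j = v (j:ℕ) := by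
                rw [hw2, Function.update_of_ne (Ne.symm h2), hw0at]
              rw [e1, hΛv, D_update_neg]
              have hz : D (Function.update w2 j (v ((j:ℕ)+2))) = 0 := by
                refine D_eq_zero (a := j) (b := ⟨(j:ℕ)+2, hb⟩)
                  (Fin.ne_of_val_ne (by simp)) ?_
                rw [Function.update_self, Function.update_of_ne (Fin.ne_of_val_ne (by simp)),
                  hw2, Function.update_of_ne (Fin.ne_of_val_ne (by rw [c2]; simp; omega)),
                  hw0at]
              rw [hz, neg_zero]
    rw [Finset.sum_congr rfl fun j _ => hterm j, Finset.sum_add_distrib,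
      Finset.sum_add_distrib]
    simp [Finset.sum_ite_eq']
  -- Step 3
  have step3 : Λ.trace * D w1 = D (Function.update w0 n3 a1)
      + T4 + D (Function.update w0 n1 (v (N+3))) := by
    rw [D_trace]
    have hterm : ∀ j : Fin N, D (Function.update w1 j (Λ.mulVec (w1 j)))
        = (if j = n3 then D (Function.update w0 n3 a1) else 0)
          + (if j = n2 then T4 else 0)
          + (if j = n1 then D (Function.update w0 n1 (v (N+3))) else 0) := by
      intro j
      by_cases h3 : n3 = j
      · subst h3
        rw [if_pos rfl, if_neg d32, if_neg d31]
        simp only [add_zero]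
        have e1 : w1 n3 = v (N-3) := by
          rw [hw1, Function.update_of_ne d31, w0n3]
        rw [e1, hΛv, show N-3+2 = N-1 from by omega, D_update_neg]
        have hcomp : (fun j => (Function.update w1 n3 (v (N-1))) (Equiv.swap n3 n1 j))
            = Function.update w0 n3 a1 := by
          funext j
          rcases eq_or_ne n3 j with rfl | hj3
          · show (Function.update w1 n3 (v (N-1))) (Equiv.swap n3 n1 n3) = _
            rw [Equiv.swap_apply_left, Function.update_self,
              Function.update_of_ne (Ne.symm d31), hw1, Function.update_self]
          rcases eq_or_ne n1 j with rfl | hj1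
          · show (Function.update w1 n3 (v (N-1))) (Equiv.swap n3 n1 n1) = _
            rw [Equiv.swap_apply_right, Function.update_self,
              Function.update_of_ne (Ne.symm d31), w0n1]
          · show (Function.update w1 n3 (v (N-1))) (Equiv.swap n3 n1 j) = _
            rw [Equiv.swap_apply_of_ne_of_ne (Ne.symm hj3) (Ne.symm hj1),
              Function.update_of_ne (Ne.symm hj3), Function.update_of_ne (Ne.symm hj3),
              hw1, Function.update_of_ne (Ne.symm hj1)]
        rw [← hcomp, D_comp_swap d31]
      · by_cases h4 : n4 = j
        · subst h4
          rw [if_neg d43, if_neg d42, if_neg d41]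
          simp only [add_zero]
          have e1 : w1 n4 = v (N-4) := by
            rw [hw1, Function.update_of_ne d41, w0n4]
          rw [e1, hΛv, show N-4+2 = N-2 from by omega, D_update_neg]
          have hz : D (Function.update w1 n4 (v (N-2))) = 0 := by
            refine D_eq_zero (a := n4) (b := n2) d42 ?_
            rw [Function.update_self, Function.update_of_ne (Ne.symm d42), w1n2]
          rw [hz, neg_zero]
        · by_cases h2 : n2 = j
          · subst h2
            rw [if_neg (Ne.symm d32), if_pos rfl, if_neg d21]
            simp only [add_zero, zero_add]
            rw [w1n2, ← ha2def, hw1, Function.update_comm (Ne.symm d21), ← hw2, ← hT4]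
          · by_cases h1 : n1 = j
            · subst h1
              rw [if_neg (Ne.symm d31), if_neg (Ne.symm d21), if_pos rfl]
              simp only [zero_add]
              have e1 : w1 n1 = a1 := by rw [hw1, Function.update_self]
              rw [e1, ha1', hw1, Function.update_idem]
            · rw [if_neg (Ne.symm h3), if_neg (Ne.symm h2), if_neg (Ne.symm h1)]
              simp only [add_zero]
              have hjv4 : (j:ℕ) ≠ N-4 := fun hh => h4 (Fin.ext (c4.trans hh.symm))
              have hjv3 : (j:ℕ) ≠ N-3 := fun hh => h3 (Fin.ext (c3.trans hh.symm))
              have hjv2 : (j:ℕ) ≠ N-2 := fun hh => h2 (Fin.ext (c2.trans hh.symm))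
              have hjv1 : (j:ℕ) ≠ N-1 := fun hh => h1 (Fin.ext (c1.trans hh.symm))
              have hj5 : (j:ℕ) ≤ N-5 := by have := j.isLt; omega
              have hb : (j:ℕ)+2 < N := by omega
              have e1 : w1 j = v (j:ℕ) := by
                rw [hw1, Function.update_of_ne (Ne.symm h1), hw0at]
              rw [e1, hΛv, D_update_neg]
              have hz : D (Function.update w1 j (v ((j:ℕ)+2))) = 0 := by
                refine D_eq_zero (a := j) (b := ⟨(j:ℕ)+2, hb⟩)
                  (Fin.ne_of_val_ne (by simp)) ?_
                rw [Function.update_self, Function.update_of_ne (Fin.ne_of_val_ne (by simp)),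
                  hw1, Function.update_of_ne (Fin.ne_of_val_ne (by rw [c1]; simp; omega)),
                  hw0at]
              rw [hz, neg_zero]
    rw [Finset.sum_congr rfl fun j _ => hterm j, Finset.sum_add_distrib,
      Finset.sum_add_distrib]
    simp [Finset.sum_ite_eq']
  -- combine
  have comb : Λ.trace^2 * D w0
      = D (Function.update w0 n4 a2) + D (Function.update w0 n3 a1)
        + D (Function.update w0 n2 (v (N+2))) + 2*T4
        + D (Function.update w0 n1 (v (N+3))) := by
    have h : Λ.trace^2 * D w0 = Λ.trace * (Λ.trace * D w0) := by ring
    rw [h, step1, mul_add, step2, step3]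
    ring
  -- pattern 1
  have e1 : D (fun j : Fin N => v (if (j:ℕ) < N-4 then (j:ℕ) else (j:ℕ)+1))
      = D (Function.update w0 n4 a2) := by
    have hp : ∀ j : Fin N, v (if (j:ℕ) < N-4 then (j:ℕ) else (j:ℕ)+1)
        = (Function.update w0 n4 (v N))
            (Equiv.swap n4 n3 (Equiv.swap n3 n2 (Equiv.swap n2 n1 j))) := by
      intro j
      rcases eq_or_ne n1 j with rfl | hj1
      · rw [Equiv.swap_apply_right, Equiv.swap_apply_right, Equiv.swap_apply_right,
          Function.update_self, c1, if_neg (by omega)]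
        exact congrArg v (by omega)
      rcases eq_or_ne n2 j with rfl | hj2
      · rw [Equiv.swap_apply_left,
          Equiv.swap_apply_of_ne_of_ne (Ne.symm d31) (Ne.symm d21),
          Equiv.swap_apply_of_ne_of_ne (Ne.symm d41) (Ne.symm d31),
          Function.update_of_ne (Ne.symm d41), w0n1, c2, if_neg (by omega)]
        exact congrArg v (by omega)
      rcases eq_or_ne n3 j with rfl | hj3
      · rw [Equiv.swap_apply_of_ne_of_ne d32 d31, Equiv.swap_apply_left,
          Equiv.swap_apply_of_ne_of_ne (Ne.symm d42) (Ne.symm d32),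
          Function.update_of_ne (Ne.symm d42), w0n2, c3, if_neg (by omega)]
        exact congrArg v (by omega)
      rcases eq_or_ne n4 j with rfl | hj4
      · rw [Equiv.swap_apply_of_ne_of_ne d42 d41,
          Equiv.swap_apply_of_ne_of_ne d43 d42, Equiv.swap_apply_left,
          Function.update_of_ne (Ne.symm d43), w0n3, c4, if_neg (by omega)]
        exact congrArg v (by omega)
      · have hjv1 : (j:ℕ) ≠ N-1 := fun hh => hj1 (Fin.ext (c1.trans hh.symm))
        have hjv2 : (j:ℕ) ≠ N-2 := fun hh => hj2 (Fin.ext (c2.trans hh.symm))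
        have hjv3 : (j:ℕ) ≠ N-3 := fun hh => hj3 (Fin.ext (c3.trans hh.symm))
        have hjv4 : (j:ℕ) ≠ N-4 := fun hh => hj4 (Fin.ext (c4.trans hh.symm))
        have hlt := j.isLt
        rw [Equiv.swap_apply_of_ne_of_ne (Ne.symm hj2) (Ne.symm hj1),
          Equiv.swap_apply_of_ne_of_ne (Ne.symm hj3) (Ne.symm hj2),
          Equiv.swap_apply_of_ne_of_ne (Ne.symm hj4) (Ne.symm hj3),
          Function.update_of_ne (Ne.symm hj4), hw0at, if_pos (by omega)]
    rw [show (fun j : Fin N => v (if (j:ℕ) < N-4 then (j:ℕ) else (j:ℕ)+1))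
        = fun j => (Function.update w0 n4 (v N))
            (Equiv.swap n4 n3 (Equiv.swap n3 n2 (Equiv.swap n2 n1 j))) from funext hp]
    have s1 : D (fun j : Fin N => (Function.update w0 n4 (v N))
            (Equiv.swap n4 n3 (Equiv.swap n3 n2 (Equiv.swap n2 n1 j))))
        = - D (fun j : Fin N => (Function.update w0 n4 (v N))
            (Equiv.swap n4 n3 (Equiv.swap n3 n2 j))) :=
      D_swap_outer d21 (Function.update w0 n4 (v N))
        (fun x => Equiv.swap n4 n3 (Equiv.swap n3 n2 x))
    have s2 : D (fun j : Fin N => (Function.update w0 n4 (v N))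
            (Equiv.swap n4 n3 (Equiv.swap n3 n2 j)))
        = - D (fun j : Fin N => (Function.update w0 n4 (v N)) (Equiv.swap n4 n3 j)) :=
      D_swap_outer d32 (Function.update w0 n4 (v N)) (fun x => Equiv.swap n4 n3 x)
    have s3 : D (fun j : Fin N => (Function.update w0 n4 (v N)) (Equiv.swap n4 n3 j))
        = - D (Function.update w0 n4 (v N)) :=
      D_comp_swap d43 (Function.update w0 n4 (v N))
    rw [s1, s2, s3, ha2, D_update_neg]
    ring
  -- pattern 2
  have e2 : D (fun j : Fin N => v (if (j:ℕ) < N-3 then (j:ℕ)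
        else if (j:ℕ) < N-1 then (j:ℕ)+1 else (j:ℕ)+2))
      = - D (Function.update w0 n3 a1) := by
    have hp : ∀ j : Fin N, v (if (j:ℕ) < N-3 then (j:ℕ)
          else if (j:ℕ) < N-1 then (j:ℕ)+1 else (j:ℕ)+2)
        = (Function.update w0 n3 (v (N+1)))
            (Equiv.swap n3 n2 (Equiv.swap n2 n1 j)) := by
      intro j
      rcases eq_or_ne n1 j with rfl | hj1
      · rw [Equiv.swap_apply_right, Equiv.swap_apply_right, Function.update_self,
          c1, if_neg (by omega), if_neg (by omega)]
        exact congrArg v (by omega)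
      rcases eq_or_ne n2 j with rfl | hj2
      · rw [Equiv.swap_apply_left,
          Equiv.swap_apply_of_ne_of_ne (Ne.symm d31) (Ne.symm d21),
          Function.update_of_ne (Ne.symm d31), w0n1, c2, if_neg (by omega),
          if_pos (by omega)]
        exact congrArg v (by omega)
      rcases eq_or_ne n3 j with rfl | hj3
      · rw [Equiv.swap_apply_of_ne_of_ne d32 d31, Equiv.swap_apply_left,
          Function.update_of_ne (Ne.symm d32), w0n2, c3, if_neg (by omega),
          if_pos (by omega)]
        exact congrArg v (by omega)
      · have hjv1 : (j:ℕ) ≠ N-1 := fun hh => hj1 (Fin.ext (c1.trans hh.symm))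
        have hjv2 : (j:ℕ) ≠ N-2 := fun hh => hj2 (Fin.ext (c2.trans hh.symm))
        have hjv3 : (j:ℕ) ≠ N-3 := fun hh => hj3 (Fin.ext (c3.trans hh.symm))
        have hlt := j.isLt
        rw [Equiv.swap_apply_of_ne_of_ne (Ne.symm hj2) (Ne.symm hj1),
          Equiv.swap_apply_of_ne_of_ne (Ne.symm hj3) (Ne.symm hj2),
          Function.update_of_ne (Ne.symm hj3), hw0at, if_pos (by omega)]
    rw [show (fun j : Fin N => v (if (j:ℕ) < N-3 then (j:ℕ)
          else if (j:ℕ) < N-1 then (j:ℕ)+1 else (j:ℕ)+2))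
        = fun j => (Function.update w0 n3 (v (N+1)))
            (Equiv.swap n3 n2 (Equiv.swap n2 n1 j)) from funext hp]
    have s1 : D (fun j : Fin N => (Function.update w0 n3 (v (N+1)))
            (Equiv.swap n3 n2 (Equiv.swap n2 n1 j)))
        = - D (fun j : Fin N => (Function.update w0 n3 (v (N+1))) (Equiv.swap n3 n2 j)) :=
      D_swap_outer d21 (Function.update w0 n3 (v (N+1))) (fun x => Equiv.swap n3 n2 x)
    have s2 : D (fun j : Fin N => (Function.update w0 n3 (v (N+1))) (Equiv.swap n3 n2 j))
        = - D (Function.update w0 n3 (v (N+1))) :=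
      D_comp_swap d32 (Function.update w0 n3 (v (N+1)))
    rw [s1, s2, ha1, D_update_neg]
  -- pattern 3
  have e3 : D (fun j : Fin N => v (if (j:ℕ) < N-2 then (j:ℕ)
        else if (j:ℕ) < N-1 then (j:ℕ)+1 else (j:ℕ)+3))
      = - D (Function.update w0 n2 (v (N+2))) := by
    have hp : ∀ j : Fin N, v (if (j:ℕ) < N-2 then (j:ℕ)
          else if (j:ℕ) < N-1 then (j:ℕ)+1 else (j:ℕ)+3)
        = (Function.update w0 n2 (v (N+2))) (Equiv.swap n2 n1 j) := by
      intro j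
      rcases eq_or_ne n1 j with rfl | hj1
      · rw [Equiv.swap_apply_right, Function.update_self, c1, if_neg (by omega),
          if_neg (by omega)]
        exact congrArg v (by omega)
      rcases eq_or_ne n2 j with rfl | hj2
      · rw [Equiv.swap_apply_left, Function.update_of_ne (Ne.symm d21), w0n1, c2,
          if_neg (by omega), if_pos (by omega)]
        exact congrArg v (by omega)
      · have hjv1 : (j:ℕ) ≠ N-1 := fun hh => hj1 (Fin.ext (c1.trans hh.symm))
        have hjv2 : (j:ℕ) ≠ N-2 := fun hh => hj2 (Fin.ext (c2.trans hh.symm))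
        have hlt := j.isLt
        rw [Equiv.swap_apply_of_ne_of_ne (Ne.symm hj2) (Ne.symm hj1),
          Function.update_of_ne (Ne.symm hj2), hw0at, if_pos (by omega)]
    rw [show (fun j : Fin N => v (if (j:ℕ) < N-2 then (j:ℕ)
          else if (j:ℕ) < N-1 then (j:ℕ)+1 else (j:ℕ)+3))
        = fun j => (Function.update w0 n2 (v (N+2))) (Equiv.swap n2 n1 j) from funext hp,
      D_comp_swap d21]
  -- pattern 4
  have hTT : T4 = D (Function.update (Function.update w0 n2 (v N)) n1 (v (N+1))) := by
    rw [hT4, hw2, ha1, ha2, D_update_neg,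
      Function.update_comm (show n2 ≠ n1 from d21), D_update_neg,
      Function.update_comm (Ne.symm d21), neg_neg]
  have e4 : D (fun j : Fin N => v (if (j:ℕ) < N-2 then (j:ℕ) else (j:ℕ)+2)) = T4 := by
    have hp : ∀ j : Fin N, v (if (j:ℕ) < N-2 then (j:ℕ) else (j:ℕ)+2)
        = Function.update (Function.update w0 n2 (v N)) n1 (v (N+1)) j := by
      intro j
      rcases eq_or_ne n1 j with rfl | hj1
      · rw [Function.update_self, c1, if_neg (by omega)]
        exact congrArg v (by omega)
      rcases eq_or_ne n2 j with rfl | hj2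
      · rw [Function.update_of_ne d21, Function.update_self, c2, if_neg (by omega)]
        exact congrArg v (by omega)
      · have hjv1 : (j:ℕ) ≠ N-1 := fun hh => hj1 (Fin.ext (c1.trans hh.symm))
        have hjv2 : (j:ℕ) ≠ N-2 := fun hh => hj2 (Fin.ext (c2.trans hh.symm))
        have hlt := j.isLt
        rw [Function.update_of_ne (Ne.symm hj1), Function.update_of_ne (Ne.symm hj2),
          hw0at, if_pos (by omega)]
    rw [show (fun j : Fin N => v (if (j:ℕ) < N-2 then (j:ℕ) else (j:ℕ)+2))
        = Function.update (Function.update w0 n2 (v N)) n1 (v (N+1)) from funext hp, hTT]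
  -- pattern 5
  have e5 : D (fun j : Fin N => v (if (j:ℕ) < N-1 then (j:ℕ) else (j:ℕ)+4))
      = D (Function.update w0 n1 (v (N+3))) := by
    have hp : ∀ j : Fin N, v (if (j:ℕ) < N-1 then (j:ℕ) else (j:ℕ)+4)
        = Function.update w0 n1 (v (N+3)) j := by
      intro j
      rcases eq_or_ne n1 j with rfl | hj1
      · rw [Function.update_self, c1, if_neg (by omega)]
        exact congrArg v (by omega)
      · have hjv1 : (j:ℕ) ≠ N-1 := fun hh => hj1 (Fin.ext (c1.trans hh.symm))
        have hlt := j.isLt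
        rw [Function.update_of_ne (Ne.symm hj1), hw0at, if_pos (by omega)]
    rw [show (fun j : Fin N => v (if (j:ℕ) < N-1 then (j:ℕ) else (j:ℕ)+4))
        = Function.update w0 n1 (v (N+3)) from funext hp]
  rw [comb, e1, e2, e3, e4, e5]
  ring

end WAux

namespace WAux2

lemma px_apply {f : ℝ × ℝ → ℝ} (hf : ContDiff ℝ (⊤ : ℕ∞) f) (p : ℝ × ℝ) :
    px f p = fderiv ℝ f p (1, 0) := by
  have h1 : HasDerivAt (fun x : ℝ => (x, p.2)) ((1:ℝ), (0:ℝ)) p.1 := by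
    simpa using (hasDerivAt_id p.1).prodMk (hasDerivAt_const p.1 p.2)
  have hd : HasFDerivAt f (fderiv ℝ f p) ((fun x : ℝ => (x, p.2)) p.1) := by
    simpa using ((hf.differentiable (by simp)) p).hasFDerivAt
  have h2 : HasDerivAt (fun x : ℝ => f (x, p.2)) (fderiv ℝ f p (1, 0)) p.1 :=
    hd.comp_hasDerivAt p.1 h1
  exact h2.deriv

lemma contDiff_px {f : ℝ × ℝ → ℝ} (hf : ContDiff ℝ (⊤ : ℕ∞) f) : ContDiff ℝ (⊤ : ℕ∞) (px f) := by
  have h : px f = fun p => fderiv ℝ f p (1, 0) := funext (px_apply hf)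
  rw [h]
  exact (hf.fderiv_right (by simp)).clm_apply contDiff_const

lemma contDiff_px_iter {f : ℝ × ℝ → ℝ} (hf : ContDiff ℝ (⊤ : ℕ∞) f) (k : ℕ) :
    ContDiff ℝ (⊤ : ℕ∞) (px^[k] f) := by
  induction k with
  | zero => exact hf
  | succ k ih => rw [Function.iterate_succ_apply']; exact contDiff_px ih

lemma slice_hasDerivAt {f : ℝ × ℝ → ℝ} (hf : ContDiff ℝ (⊤ : ℕ∞) f) (x t : ℝ) :
    HasDerivAt (fun x' => f (x', t)) (px f (x, t)) x := by
  have hdiff : DifferentiableAt ℝ (fun x' : ℝ => f (x', t)) x := by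
    have h1 : DifferentiableAt ℝ (fun x' : ℝ => (x', t)) x :=
      (differentiableAt_id.prodMk (differentiableAt_const t))
    exact (((hf.differentiable (by simp)) (x, t)).comp x h1 : _)
  exact hdiff.hasDerivAt

lemma iter_cond {N : ℕ} (φ : Fin N → ℝ × ℝ → ℝ)
    (hφ : ∀ i, ContDiff ℝ (⊤ : ℕ∞) (φ i))
    (lam : Fin N → Fin N → ℝ → ℝ)
    (hcond : ∀ i, ∀ p : ℝ × ℝ, -((px^[2] (φ i)) p) = ∑ j, lam i j p.2 * φ j p) :
    ∀ (k : ℕ) (i : Fin N) (q : ℝ × ℝ),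
      px^[k+2] (φ i) q = -∑ j, lam i j q.2 * px^[k] (φ j) q := by
  intro k
  induction k with
  | zero =>
    intro i q
    have h := hcond i q
    simp only [Function.iterate_zero_apply]
    linarith
  | succ k ih =>
    intro i q
    obtain ⟨x, t⟩ := q
    have hrw : px^[k+1+2] (φ i) = px (px^[k+2] (φ i)) := by
      rw [show k+1+2 = (k+2)+1 from by omega, Function.iterate_succ_apply']
    rw [hrw]
    have hfun : (fun x' => px^[k+2] (φ i) (x', t))
        = fun x' => -∑ j, lam i j t * px^[k] (φ j) (x', t) := by
      funext x'
      exact ih i (x', t)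
    have hsum : HasDerivAt (fun x' => -∑ j, lam i j t * px^[k] (φ j) (x', t))
        (-∑ j, lam i j t * px^[k+1] (φ j) (x, t)) x := by
      refine HasDerivAt.neg ?_
      refine HasDerivAt.fun_sum fun j _ => ?_
      have h1 := (slice_hasDerivAt (contDiff_px_iter (hφ j) k) x t).const_mul (lam i j t)
      have h2 : px (px^[k] (φ j)) (x, t) = px^[k+1] (φ j) (x, t) := by
        rw [Function.iterate_succ_apply']
      rwa [h2] at h1
    show deriv (fun x' => px^[k+2] (φ i) (x', t)) x = _
    rw [hfun]
    exact hsum.deriv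

end WAux2


/-- Under `-∂ₓ²φ_i = ∑_j λ_{ij}(t) φ_j`, one has
`(∑ᵢ λ_{ii}(t))² (Ŵ{N−1}) = (Ŵ{N−5},N−3,N−2,N−1,N) − (Ŵ{N−4},N−2,N−1,N+1)
 − (Ŵ{N−3},N−1,N+2) + 2 (Ŵ{N−3},N,N+1) + (Ŵ{N−2},N+3)`. -/
theorem trace_sq_mul_wronskian_eq
    (N : ℕ) (hN : 5 ≤ N) (φ : Fin N → ℝ × ℝ → ℝ)
    (hφ : ∀ i, ContDiff ℝ (⊤ : ℕ∞) (φ i))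
    (lam : Fin N → Fin N → ℝ → ℝ)
    (hcond : ∀ i, ∀ p : ℝ × ℝ, -((px^[2] (φ i)) p) = ∑ j, lam i j p.2 * φ j p) :
    ∀ p : ℝ × ℝ,
      (∑ i, lam i i p.2) ^ 2 * wdet N φ (fun j => (j : ℕ)) p
        = wdet N φ (fun j => if (j : ℕ) < N - 4 then (j : ℕ) else (j : ℕ) + 1) p
          - wdet N φ (fun j => if (j : ℕ) < N - 3 then (j : ℕ)
              else if (j : ℕ) < N - 1 then (j : ℕ) + 1 else (j : ℕ) + 2) p
          - wdet N φ (fun j => if (j : ℕ) < N - 2 then (j : ℕ)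
              else if (j : ℕ) < N - 1 then (j : ℕ) + 1 else (j : ℕ) + 3) p
          + 2 * wdet N φ (fun j => if (j : ℕ) < N - 2 then (j : ℕ) else (j : ℕ) + 2) p
          + wdet N φ (fun j => if (j : ℕ) < N - 1 then (j : ℕ) else (j : ℕ) + 4) p := by
  intro p
  set Λ : Matrix (Fin N) (Fin N) ℝ := Matrix.of fun i j => lam i j p.2 with hΛ
  set v : ℕ → Fin N → ℝ := fun k i => px^[k] (φ i) p with hvdef
  have hvk : ∀ k, v (k + 2) = -(Λ.mulVec (v k)) := by
    intro k
    funext i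
    have h := WAux2.iter_cond φ hφ lam hcond k i p
    show px^[k+2] (φ i) p = -(Λ.mulVec (v k)) i
    rw [h]
    simp [Matrix.mulVec, dotProduct, hΛ, hvdef]
  have htr : Λ.trace = ∑ i, lam i i p.2 := by
    simp [Matrix.trace, Matrix.diag, hΛ]
  have hw : ∀ ord : Fin N → ℕ, wdet N φ ord p = WAux.D (fun j => v (ord j)) := by
    intro ord
    have h : (Matrix.of fun i j : Fin N => (px^[ord j] (φ i)) p)
        = (Matrix.of (fun j => v (ord j))).transpose := by
      ext i j
      simp [Matrix.transpose_apply, hvdef]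
    rw [wdet, h, Matrix.det_transpose, WAux.D]
  have hkey := WAux.key hN Λ v hvk
  rw [hw, hw, hw, hw, hw, hw, ← htr]
  exact hkey
end

section
/- Let x³ + 12t ≠ 0 at a point (x,t) ∈ ℝ×ℝ. Then the rational function u(x,t) = (6x⁴ − 144xt)/(x³ + 12t)², which equals −2 ∂_x² ln W(φ₀,φ₁) with φ₀ = x and φ₁ = x³/6 − 4t, satisfies the KdV equation u_t − 6 u u_x + u_{xxx} = 0 at every point where x³ + 12t ≠ 0. -/
/-- The Wronskian determinant in the `x`-variable of `N` functions of `(x,t)`. -/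
noncomputable def wronskian (N : ℕ) (φ : Fin N → ℝ × ℝ → ℝ) (p : ℝ × ℝ) : ℝ :=
  Matrix.det (Matrix.of fun i j : Fin N => (px^[(j : ℕ)] (φ i)) p)

/-!
The Wronskian of `x` and `x³/6 − 4t` is `g = (x³ + 12t)/3`, so `g_x = x²`, `g_xx = 2x`, and
`u = −2 ∂ₓ² ln g` is a rational identity. For the KdV equation, the `x`-slices of `u, u_x, u_xx`
agree with rational functions `N/(x³ + 12t)^k` on the open set where the denominator does not
vanish, which lets the quotient rule be iterated to closed forms of `u_x, u_xx, u_xxx`; together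
with `u_t`, the KdV expression clears denominators to a polynomial identity.
-/

open Set

theorem wronskian_two (φ ψ : ℝ × ℝ → ℝ) (p : ℝ × ℝ) :
    wronskian 2 ![φ, ψ] p = φ p * px ψ p - px φ p * ψ p :=
  Matrix.det_fin_two _

theorem px_eqOn_of_hasDerivAt {f : ℝ × ℝ → ℝ} {φ φ' : ℝ → ℝ} {U : Set ℝ} {t : ℝ}
    (hU : IsOpen U) (hf : EqOn (fun y => f (y, t)) φ U)
    (hφ : ∀ y ∈ U, HasDerivAt φ (φ' y) y) :
    EqOn (fun y => px f (y, t)) φ' U := fun y hy => by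
  have hloc : (fun z => f (z, t)) =ᶠ[nhds y] φ := hf.eventuallyEq_of_mem (hU.mem_nhds hy)
  exact hloc.deriv_eq.trans (hφ y hy).deriv

theorem pt_eq_of_hasDerivAt {f : ℝ × ℝ → ℝ} {ψ : ℝ → ℝ} {x t ψ' : ℝ}
    (hf : ∀ s, f (x, s) = ψ s) (hψ : HasDerivAt ψ ψ' t) : pt f (x, t) = ψ' := by
  rw [pt, show (fun s => f ((x, t).1, s)) = ψ from funext hf]
  exact hψ.deriv

theorem HasDerivAt.div_pow {N D : ℝ → ℝ} {N' D' x : ℝ} (k : ℕ) (hN : HasDerivAt N N' x)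
    (hD : HasDerivAt D D' x) (hx : D x ≠ 0) :
    HasDerivAt (fun y => N y / D y ^ k) ((N' * D x - k * N x * D') / D x ^ (k + 1)) x := by
  refine (hN.div (hD.fun_pow k) (pow_ne_zero k hx)).congr_deriv ?_
  rcases k with _ | k
  · simp [hx]
  · field_simp
    push_cast
    ring

section RationalSolution

variable {x t : ℝ}

theorem hasDerivAt_div_cubic_pow {N : ℝ → ℝ} {N' : ℝ} (k : ℕ) (hN : HasDerivAt N N' x)
    (hx : x ^ 3 + 12 * t ≠ 0) :
    HasDerivAt (fun y => N y / (y ^ 3 + 12 * t) ^ k)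
      ((N' * (x ^ 3 + 12 * t) - 3 * k * x ^ 2 * N x) / (x ^ 3 + 12 * t) ^ (k + 1)) x := by
  have hD : HasDerivAt (fun y => y ^ 3 + 12 * t) (3 * x ^ 2) x := by
    simpa using (hasDerivAt_pow 3 x).add_const (12 * t)
  convert hN.div_pow k hD hx using 2
  ring

theorem hasDerivAt_rationalSolution_dx (hx : x ^ 3 + 12 * t ≠ 0) :
    HasDerivAt (fun y => (6 * y ^ 4 - 144 * y * t) / (y ^ 3 + 12 * t) ^ 2)
      ((-12 * x ^ 6 + 1008 * x ^ 3 * t - 1728 * t ^ 2) / (x ^ 3 + 12 * t) ^ 3) x := by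
  have hN : HasDerivAt (fun y => 6 * y ^ 4 - 144 * y * t) (24 * x ^ 3 - 144 * t) x := by
    exact (((hasDerivAt_pow 4 x).const_mul 6).fun_sub
      (((hasDerivAt_id' x).const_mul 144).mul_const t)).congr_deriv (by ring)
  convert hasDerivAt_div_cubic_pow 2 hN hx using 2
  push_cast
  ring

theorem hasDerivAt_rationalSolution_dx2 (hx : x ^ 3 + 12 * t ≠ 0) :
    HasDerivAt (fun y => (-12 * y ^ 6 + 1008 * y ^ 3 * t - 1728 * t ^ 2) / (y ^ 3 + 12 * t) ^ 3)
      ((36 * x ^ 8 - 6912 * x ^ 5 * t + 51840 * x ^ 2 * t ^ 2) / (x ^ 3 + 12 * t) ^ 4) x := by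
  have hN : HasDerivAt (fun y => -12 * y ^ 6 + 1008 * y ^ 3 * t - 1728 * t ^ 2)
      (-72 * x ^ 5 + 3024 * x ^ 2 * t) x := by
    exact ((((hasDerivAt_pow 6 x).const_mul (-12)).fun_add
      (((hasDerivAt_pow 3 x).const_mul 1008).mul_const t)).sub_const (1728 * t ^ 2)).congr_deriv
      (by ring)
  convert hasDerivAt_div_cubic_pow 3 hN hx using 2
  push_cast
  ring

theorem hasDerivAt_rationalSolution_dx3 (hx : x ^ 3 + 12 * t ≠ 0) :
    HasDerivAt
      (fun y => (36 * y ^ 8 - 6912 * y ^ 5 * t + 51840 * y ^ 2 * t ^ 2) / (y ^ 3 + 12 * t) ^ 4)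
      ((-144 * x ^ 10 + 51840 * x ^ 7 * t - 933120 * x ^ 4 * t ^ 2 + 1244160 * x * t ^ 3) /
        (x ^ 3 + 12 * t) ^ 5) x := by
  have hN : HasDerivAt (fun y => 36 * y ^ 8 - 6912 * y ^ 5 * t + 51840 * y ^ 2 * t ^ 2)
      (288 * x ^ 7 - 34560 * x ^ 4 * t + 103680 * x * t ^ 2) x := by
    exact ((((hasDerivAt_pow 8 x).const_mul 36).fun_sub
      (((hasDerivAt_pow 5 x).const_mul 6912).mul_const t)).fun_add
      (((hasDerivAt_pow 2 x).const_mul 51840).mul_const (t ^ 2))).congr_deriv (by ring)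
  convert hasDerivAt_div_cubic_pow 4 hN hx using 2
  push_cast
  ring

theorem hasDerivAt_rationalSolution_dt (hx : x ^ 3 + 12 * t ≠ 0) :
    HasDerivAt (fun s => (6 * x ^ 4 - 144 * x * s) / (x ^ 3 + 12 * s) ^ 2)
      ((-288 * x ^ 4 + 1728 * x * t) / (x ^ 3 + 12 * t) ^ 3) t := by
  have hN : HasDerivAt (fun s => 6 * x ^ 4 - 144 * x * s) (-(144 * x)) t := by
    simpa using ((hasDerivAt_id' t).const_mul (144 * x)).const_sub (6 * x ^ 4)
  have hD : HasDerivAt (fun s => x ^ 3 + 12 * s) 12 t := by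
    simpa using ((hasDerivAt_id' t).const_mul 12).const_add (x ^ 3)
  convert hN.div_pow 2 hD hx using 2
  push_cast
  ring

end RationalSolution

theorem kdv_rationalSolution (u : ℝ × ℝ → ℝ)
    (hu : ∀ p : ℝ × ℝ, u p = (6 * p.1 ^ 4 - 144 * p.1 * p.2) / (p.1 ^ 3 + 12 * p.2) ^ 2)
    (p : ℝ × ℝ) (hp : p.1 ^ 3 + 12 * p.2 ≠ 0) :
    pt u p - 6 * u p * px u p + (px^[3] u) p = 0 := by
  obtain ⟨x, t⟩ := p
  change x ^ 3 + 12 * t ≠ 0 at hp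
  have hU : IsOpen {y : ℝ | y ^ 3 + 12 * t ≠ 0} := isOpen_ne_fun (by fun_prop) continuous_const
  have hu1 := px_eqOn_of_hasDerivAt hU (fun y _ => hu (y, t))
    fun _ hy => hasDerivAt_rationalSolution_dx hy
  have hu2 := px_eqOn_of_hasDerivAt hU hu1 fun _ hy => hasDerivAt_rationalSolution_dx2 hy
  have hu3 := px_eqOn_of_hasDerivAt hU hu2 fun _ hy => hasDerivAt_rationalSolution_dx3 hy
  have hut := pt_eq_of_hasDerivAt (fun s => hu (x, s)) (hasDerivAt_rationalSolution_dt hp)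
  change pt u (x, t) - 6 * u (x, t) * px u (x, t) + px (px (px u)) (x, t) = 0
  simp only [hut, hu, hu1 hp, hu3 hp]
  field_simp
  ring

theorem wronskian_x_cubic (p : ℝ × ℝ) :
    wronskian 2 ![fun q : ℝ × ℝ => q.1, fun q : ℝ × ℝ => q.1 ^ 3 / 6 - 4 * q.2] p =
      (p.1 ^ 3 + 12 * p.2) / 3 := by
  obtain ⟨x, t⟩ := p
  have h₀ : px (fun q : ℝ × ℝ => q.1) (x, t) = 1 :=
    px_eqOn_of_hasDerivAt (φ' := fun _ => 1) isOpen_univ (fun _ _ => rfl)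
      (fun y _ => hasDerivAt_id' y) (mem_univ x)
  have h₁ : px (fun q : ℝ × ℝ => q.1 ^ 3 / 6 - 4 * q.2) (x, t) = x ^ 2 / 2 :=
    px_eqOn_of_hasDerivAt (φ' := fun y => y ^ 2 / 2) isOpen_univ (fun _ _ => rfl)
      (fun y _ => (((hasDerivAt_pow 3 y).div_const 6).sub_const (4 * t)).congr_deriv (by ring))
      (mem_univ x)
  rw [wronskian_two, h₀, h₁]
  ring

theorem rationalSolution_eq_neg_two_dx2_log (u g : ℝ × ℝ → ℝ)
    (hu : ∀ p : ℝ × ℝ, u p = (6 * p.1 ^ 4 - 144 * p.1 * p.2) / (p.1 ^ 3 + 12 * p.2) ^ 2)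
    (hg : ∀ p : ℝ × ℝ,
      g p = wronskian 2 ![fun q : ℝ × ℝ => q.1, fun q : ℝ × ℝ => q.1 ^ 3 / 6 - 4 * q.2] p)
    (p : ℝ × ℝ) :
    u p = -2 * (g p * (px^[2] g) p - (px g p) ^ 2) / (g p) ^ 2 := by
  obtain ⟨x, t⟩ := p
  have hg₀ : EqOn (fun y => g (y, t)) (fun y => (y ^ 3 + 12 * t) / 3) univ :=
    fun y _ => (hg (y, t)).trans (wronskian_x_cubic (y, t))
  have hg₁ := px_eqOn_of_hasDerivAt (φ' := fun y => y ^ 2) isOpen_univ hg₀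
    fun y _ => (((hasDerivAt_pow 3 y).add_const (12 * t)).div_const 3).congr_deriv (by ring)
  have hg₂ := px_eqOn_of_hasDerivAt (φ' := fun y => 2 * y) isOpen_univ hg₁
    fun y _ => by simpa [mul_comm] using hasDerivAt_pow 2 y
  change u (x, t) = -2 * (g (x, t) * px (px g) (x, t) - px g (x, t) ^ 2) / g (x, t) ^ 2
  simp only [hu, hg₀ (mem_univ x), hg₁ (mem_univ x), hg₂ (mem_univ x)]
  by_cases hD : x ^ 3 + 12 * t = 0
  · simp [hD]
  · field_simp
    ring

/-- The rational solution `u = (6x⁴ − 144xt)/(x³ + 12t)²` equals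
`−2∂ₓ² ln W(φ₀, φ₁)` with `φ₀ = x`, `φ₁ = x³/6 − 4t`, and satisfies the KdV equation
`u_t − 6uu_x + u_{xxx} = 0` wherever `x³ + 12t ≠ 0`. -/
theorem rational_solution_order_one
    (u g : ℝ × ℝ → ℝ)
    (hu : ∀ p : ℝ × ℝ, u p = (6 * p.1 ^ 4 - 144 * p.1 * p.2) / (p.1 ^ 3 + 12 * p.2) ^ 2)
    (hg : ∀ p : ℝ × ℝ,
      g p = wronskian 2 ![fun q : ℝ × ℝ => q.1, fun q : ℝ × ℝ => q.1 ^ 3 / 6 - 4 * q.2] p) :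
    ∀ p : ℝ × ℝ, p.1 ^ 3 + 12 * p.2 ≠ 0 →
      (u p = -2 * (g p * (px^[2] g) p - (px g p) ^ 2) / (g p) ^ 2) ∧
      (pt u p - 6 * u p * px u p + (px^[3] u) p = 0) :=
  fun p hp => ⟨rationalSolution_eq_neg_two_dx2_log u g hu hg p, kdv_rationalSolution u hu p hp⟩
end

section
/- Let η and γ be real constants and set θ(x,t) = ηx + 4η³t + γ. Then the order-one positon u(x,t) = 16η² [ 2cos²θ + (ηx + 12η³t) sin 2θ ] / [ 2(ηx + 12η³t) + sin 2θ ]², which equals −2 ∂_x² ln W(cos θ, ∂_λ cos θ) with λ = η², satisfies the KdV equation u_t − 6 u u_x + u_{xxx} = 0 at every point (x,t) where 2(ηx + 12η³t) + sin 2θ ≠ 0. -/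
open Set Filter Real

theorem eqOn_deriv_of_hasDerivAt {𝕜 F : Type*} [NontriviallyNormedField 𝕜]
    [NormedAddCommGroup F] [NormedSpace 𝕜 F] {f g g' : 𝕜 → F} {U : Set 𝕜} (hU : IsOpen U)
    (hfg : EqOn f g U) (hg : ∀ y ∈ U, HasDerivAt g (g' y) y) : EqOn (deriv f) g' U :=
  fun y hy => by
    rw [(hfg.eventuallyEq_of_mem (hU.mem_nhds hy)).deriv_eq]
    exact (hg y hy).deriv

section KdVPotential

variable {lam α T₃ y : ℝ} {T T₁ T₂ : ℝ → ℝ}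

theorem hasDerivAt_div_sq (h₀ : HasDerivAt T (T₁ y) y) (h₁ : HasDerivAt T₁ (T₂ y) y)
    (hy : T y ≠ 0) :
    HasDerivAt (fun y => T₁ y / T y ^ 2) ((T y * T₂ y - 2 * T₁ y ^ 2) / T y ^ 3) y := by
  refine (h₁.fun_div (h₀.fun_pow 2) (pow_ne_zero 2 hy)).congr_deriv ?_
  field_simp
  ring

theorem hasDerivAt_kdvPotential (h₀ : HasDerivAt T (T₁ y) y) (h₁ : HasDerivAt T₁ (T₂ y) y)
    (h₂ : HasDerivAt T₂ T₃ y) (hy : T y ≠ 0) :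
    HasDerivAt (fun y => -2 * ((T y * T₂ y - T₁ y ^ 2) / T y ^ 2))
      (-2 * ((T y ^ 2 * T₃ - 3 * T y * T₁ y * T₂ y + 2 * T₁ y ^ 3) / T y ^ 3)) y := by
  refine ((((h₀.fun_mul h₂).fun_sub (h₁.fun_pow 2)).fun_div (h₀.fun_pow 2)
    (pow_ne_zero 2 hy)).const_mul (-2)).congr_deriv ?_
  field_simp
  ring

theorem hasDerivAt_kdvPotential_deriv (h₀ : HasDerivAt T (T₁ y) y)
    (h₁ : HasDerivAt T₁ (T₂ y) y) (h₂ : HasDerivAt T₂ (α - 4 * lam * T₁ y) y)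
    (hI : T₂ y ^ 2 + 4 * lam * T₁ y ^ 2 = 2 * α * T₁ y) (hy : T y ≠ 0) :
    HasDerivAt (fun y => -2 * ((T y ^ 2 * (α - 4 * lam * T₁ y) - 3 * T y * T₁ y * T₂ y
        + 2 * T₁ y ^ 3) / T y ^ 3))
      (3 * (-2 * ((T y * T₂ y - T₁ y ^ 2) / T y ^ 2)) ^ 2
        - 4 * lam * (-2 * ((T y * T₂ y - T₁ y ^ 2) / T y ^ 2)) - 4 * α * (T₁ y / T y ^ 2)) y := by
  have h₃ := (h₀.fun_pow 2).fun_mul ((h₁.const_mul (4 * lam)).const_sub α)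
  refine ((((h₃.fun_sub (((h₀.const_mul 3).fun_mul h₁).fun_mul h₂)).fun_add
    ((h₁.fun_pow 3).const_mul 2)).fun_div (h₀.fun_pow 3) (pow_ne_zero 3 hy)).const_mul
    (-2)).congr_deriv ?_
  field_simp
  linear_combination (-6 * T y ^ 4) * hI

theorem hasDerivAt_kdvPotential_of_flow (h₀ : HasDerivAt T (2 * α + 4 * lam * T₁ y) y)
    (h₁ : HasDerivAt T₁ (4 * lam * T₂ y) y)
    (h₂ : HasDerivAt T₂ (4 * lam * (α - 4 * lam * T₁ y)) y) (hy : T y ≠ 0) :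
    HasDerivAt (fun y => -2 * ((T y * T₂ y - T₁ y ^ 2) / T y ^ 2))
      (4 * lam * (-2 * ((T y ^ 2 * (α - 4 * lam * T₁ y) - 3 * T y * T₁ y * T₂ y
          + 2 * T₁ y ^ 3) / T y ^ 3))
        + 4 * α * ((T y * T₂ y - 2 * T₁ y ^ 2) / T y ^ 3)) y := by
  refine ((((h₀.fun_mul h₂).fun_sub (h₁.fun_pow 2)).fun_div (h₀.fun_pow 2)
    (pow_ne_zero 2 hy)).const_mul (-2)).congr_deriv ?_
  field_simp
  ring

end KdVPotential

structure IsPositonTau (lam α : ℝ) (τ τ₁ τ₂ : ℝ × ℝ → ℝ) : Prop where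
  hasDerivAt_x : ∀ p : ℝ × ℝ, HasDerivAt (fun x => τ (x, p.2)) (τ₁ p) p.1
  hasDerivAt_x₁ : ∀ p : ℝ × ℝ, HasDerivAt (fun x => τ₁ (x, p.2)) (τ₂ p) p.1
  hasDerivAt_x₂ : ∀ p : ℝ × ℝ, HasDerivAt (fun x => τ₂ (x, p.2)) (α - 4 * lam * τ₁ p) p.1
  hasDerivAt_t : ∀ p : ℝ × ℝ, HasDerivAt (fun t => τ (p.1, t)) (2 * α + 4 * lam * τ₁ p) p.2
  hasDerivAt_t₁ : ∀ p : ℝ × ℝ, HasDerivAt (fun t => τ₁ (p.1, t)) (4 * lam * τ₂ p) p.2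
  hasDerivAt_t₂ : ∀ p : ℝ × ℝ,
    HasDerivAt (fun t => τ₂ (p.1, t)) (4 * lam * (α - 4 * lam * τ₁ p)) p.2
  first_integral : ∀ p : ℝ × ℝ, τ₂ p ^ 2 + 4 * lam * τ₁ p ^ 2 = 2 * α * τ₁ p

theorem IsPositonTau.kdv {lam α : ℝ} {τ τ₁ τ₂ u : ℝ × ℝ → ℝ} (h : IsPositonTau lam α τ τ₁ τ₂)
    (hu : ∀ p, u p = -2 * ((τ p * τ₂ p - τ₁ p ^ 2) / τ p ^ 2)) {p : ℝ × ℝ} (hp : τ p ≠ 0) :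
    pt u p - 6 * u p * px u p + (px^[3] u) p = 0 := by
  obtain ⟨x, t⟩ := p
  have hx₀ (y : ℝ) : HasDerivAt (fun y => τ (y, t)) (τ₁ (y, t)) y := h.hasDerivAt_x (y, t)
  have hx₁ (y : ℝ) : HasDerivAt (fun y => τ₁ (y, t)) (τ₂ (y, t)) y := h.hasDerivAt_x₁ (y, t)
  have hx₂ (y : ℝ) : HasDerivAt (fun y => τ₂ (y, t)) (α - 4 * lam * τ₁ (y, t)) y :=
    h.hasDerivAt_x₂ (y, t)
  have hU : IsOpen {y | τ (y, t) ≠ 0} :=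
    isOpen_ne_fun (continuous_iff_continuousAt.2 fun y => (hx₀ y).continuousAt) continuous_const
  have hu₁ (y : ℝ) (hy : τ (y, t) ≠ 0) := hasDerivAt_kdvPotential (hx₀ y) (hx₁ y) (hx₂ y) hy
  have hd₁ := eqOn_deriv_of_hasDerivAt hU (fun y _ => hu (y, t)) hu₁
  have hd₂ := eqOn_deriv_of_hasDerivAt hU hd₁ fun y hy =>
    hasDerivAt_kdvPotential_deriv (hx₀ y) (hx₁ y) (hx₂ y) (h.first_integral (y, t)) hy
  have hd₃ := eqOn_deriv_of_hasDerivAt hU hd₂ fun y (hy : τ (y, t) ≠ 0) =>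
    ((((hu₁ y hy).fun_pow 2).const_mul 3).fun_sub ((hu₁ y hy).const_mul (4 * lam))).fun_sub
      ((hasDerivAt_div_sq (T₂ := fun y => τ₂ (y, t)) (hx₀ y) (hx₁ y) hy).const_mul (4 * α))
  have hut := (hasDerivAt_kdvPotential_of_flow (h.hasDerivAt_t (x, t)) (h.hasDerivAt_t₁ (x, t))
    (h.hasDerivAt_t₂ (x, t)) hp).congr_of_eventuallyEq (Eventually.of_forall fun s => hu (x, s))
  have hpx₃ : (px^[3] u) (x, t) = deriv (deriv (deriv fun y => u (y, t))) x := rfl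
  rw [hpx₃, hd₃ hp, show px u (x, t) = _ from hd₁ hp, show pt u (x, t) = _ from hut.deriv, hu]
  ring

section Positon

variable (η γ : ℝ)

def positonPhase (p : ℝ × ℝ) : ℝ := η * p.1 + 4 * η ^ 3 * p.2 + γ

noncomputable def positonTau (p : ℝ × ℝ) : ℝ :=
  2 * (η * p.1 + 12 * η ^ 3 * p.2) + sin (2 * positonPhase η γ p)

theorem hasDerivAt_positonPhase_x (p : ℝ × ℝ) :
    HasDerivAt (fun x => 2 * positonPhase η γ (x, p.2)) (2 * η) p.1 :=
  (((((hasDerivAt_id' p.1).const_mul η).add_const (4 * η ^ 3 * p.2)).add_const γ).const_mul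
    2).congr_deriv (by ring)

theorem hasDerivAt_positonPhase_t (p : ℝ × ℝ) :
    HasDerivAt (fun t => 2 * positonPhase η γ (p.1, t)) (8 * η ^ 3) p.2 :=
  (((((hasDerivAt_id' p.2).const_mul (4 * η ^ 3)).const_add (η * p.1)).add_const γ).const_mul
    2).congr_deriv (by ring)

theorem isPositonTau_positonTau :
    IsPositonTau (η ^ 2) (8 * η ^ 3) (positonTau η γ)
      (fun p => 2 * η * (1 + cos (2 * positonPhase η γ p)))
      (fun p => -4 * η ^ 2 * sin (2 * positonPhase η γ p)) where
  hasDerivAt_x p := by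
    have hs := ((hasDerivAt_id' p.1).const_mul η).add_const (12 * η ^ 3 * p.2)
    exact ((hs.const_mul 2).fun_add (hasDerivAt_positonPhase_x η γ p).sin).congr_deriv (by ring)
  hasDerivAt_x₁ p :=
    (((hasDerivAt_positonPhase_x η γ p).cos.const_add 1).const_mul (2 * η)).congr_deriv (by ring)
  hasDerivAt_x₂ p :=
    ((hasDerivAt_positonPhase_x η γ p).sin.const_mul (-4 * η ^ 2)).congr_deriv (by ring)
  hasDerivAt_t p := by
    have hs := ((hasDerivAt_id' p.2).const_mul (12 * η ^ 3)).const_add (η * p.1)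
    exact ((hs.const_mul 2).fun_add (hasDerivAt_positonPhase_t η γ p).sin).congr_deriv (by ring)
  hasDerivAt_t₁ p :=
    (((hasDerivAt_positonPhase_t η γ p).cos.const_add 1).const_mul (2 * η)).congr_deriv (by ring)
  hasDerivAt_t₂ p :=
    ((hasDerivAt_positonPhase_t η γ p).sin.const_mul (-4 * η ^ 2)).congr_deriv (by ring)
  first_integral p := by
    linear_combination 16 * η ^ 4 * sin_sq_add_cos_sq (2 * positonPhase η γ p)

end Positon

/-- The order-one positon
`u = 16η²[2cos²θ + (ηx + 12η³t) sin 2θ]/[2(ηx + 12η³t) + sin 2θ]²`, with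
`θ = ηx + 4η³t + γ`, satisfies the KdV equation `u_t − 6uu_x + u_{xxx} = 0` at every point
where `2(ηx + 12η³t) + sin 2θ ≠ 0`. -/
theorem positon_order_one_solves_kdv
    (η γ : ℝ) (θ : ℝ × ℝ → ℝ) (u : ℝ × ℝ → ℝ)
    (hθ : ∀ p : ℝ × ℝ, θ p = η * p.1 + 4 * η ^ 3 * p.2 + γ)
    (hu : ∀ p : ℝ × ℝ, u p =
      16 * η ^ 2 * (2 * (Real.cos (θ p)) ^ 2
          + (η * p.1 + 12 * η ^ 3 * p.2) * Real.sin (2 * θ p))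
        / (2 * (η * p.1 + 12 * η ^ 3 * p.2) + Real.sin (2 * θ p)) ^ 2) :
    ∀ p : ℝ × ℝ, 2 * (η * p.1 + 12 * η ^ 3 * p.2) + Real.sin (2 * θ p) ≠ 0 →
      pt u p - 6 * u p * px u p + (px^[3] u) p = 0 := by
  obtain rfl : θ = positonPhase η γ := funext hθ
  refine fun p hp => (isPositonTau_positonTau η γ).kdv (fun p => ?_) hp
  rw [hu p, positonTau, cos_sq, ← mul_div_assoc]
  congr 1
  linear_combination (-8 * η ^ 2) * sin_sq_add_cos_sq (2 * positonPhase η γ p)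
end
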